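/- arXiv:2006.14860 — 9 statements merged into one kernel-verified Lean document; each statement's English description precedes it below -/
import Mathlib

section
/- Every doubly substochastic matrix (a nonnegative real matrix in which every row sum and every column sum is at most 1) can be written as a finite convex combination of subpermutation matrices (0-1 matrices with at most one 1 in each row and at most one 1 in each column). -/
open scoped Classical

/-- A subpermutation matrix: a 0-1 matrix with at most one `1` in each row
and at most one `1` in each column. -/
def IsSubpermutation {I J : Type} [Fintype I] [Fintype J]
    (Q : Matrix I J ℝ) : Prop :=
  (∀ i j, Q i j = 0 ∨ Q i j = 1) ∧
  (∀ i, ∑ j, Q i j ≤ 1) ∧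
  (∀ j, ∑ i, Q i j ≤ 1)

/-- Every doubly substochastic matrix is a finite convex combination of
subpermutation matrices. -/
theorem doubly_substochastic_convex_combination_of_subpermutations
    {I J : Type} [Fintype I] [Fintype J] (A : Matrix I J ℝ)
    (hnonneg : ∀ i j, 0 ≤ A i j)
    (hrow : ∀ i, ∑ j, A i j ≤ 1)
    (hcol : ∀ j, ∑ i, A i j ≤ 1) :
    ∃ (K : ℕ) (w : Fin K → ℝ) (Q : Fin K → Matrix I J ℝ),
      (∀ k, 0 ≤ w k) ∧ (∑ k, w k = 1) ∧
      (∀ k, IsSubpermutation (Q k)) ∧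
      A = ∑ k, w k • Q k := by
  -- Build the doubly stochastic completion on I ⊕ J
  set B : Matrix (I ⊕ J) (I ⊕ J) ℝ := fun x y =>
    match x, y with
    | .inl i, .inr j => A i j
    | .inr j, .inl i => A i j
    | .inl i, .inl i' => if i = i' then 1 - ∑ j, A i j else 0
    | .inr j, .inr j' => if j = j' then 1 - ∑ i, A i j else 0
    with hB
  have hBmem : B ∈ doublyStochastic ℝ (I ⊕ J) := by
    rw [mem_doublyStochastic_iff_sum]
    refine ⟨?_, ?_, ?_⟩
    · rintro (i | j) (i' | j')
      · show 0 ≤ if i = i' then 1 - ∑ j, A i j else 0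
        split
        · linarith [hrow i]
        · exact le_refl 0
      · exact hnonneg i j'
      · exact hnonneg i' j
      · show 0 ≤ if j = j' then 1 - ∑ i, A i j else 0
        split
        · linarith [hcol j]
        · exact le_refl 0
    · rintro (i | j)
      · rw [Fintype.sum_sum_type]
        have h1 : ∑ i' : I, B (Sum.inl i) (Sum.inl i')
            = ∑ i' : I, if i = i' then 1 - ∑ j, A i j else 0 := rfl
        have h2 : ∑ j : J, B (Sum.inl i) (Sum.inr j) = ∑ j, A i j := rfl
        rw [h1, h2, Finset.sum_ite_eq (Finset.univ) i (fun _ => 1 - ∑ j, A i j)]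
        simp
      · rw [Fintype.sum_sum_type]
        have h1 : ∑ i' : I, B (Sum.inr j) (Sum.inl i') = ∑ i, A i j := rfl
        have h2 : ∑ j' : J, B (Sum.inr j) (Sum.inr j')
            = ∑ j' : J, if j = j' then 1 - ∑ i, A i j else 0 := rfl
        rw [h1, h2, Finset.sum_ite_eq (Finset.univ) j (fun _ => 1 - ∑ i, A i j)]
        simp
    · rintro (i | j)
      · rw [Fintype.sum_sum_type]
        have h1 : ∑ i' : I, B (Sum.inl i') (Sum.inl i)
            = ∑ i' : I, if i' = i then 1 - ∑ j, A i j else 0 := by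
          refine Finset.sum_congr rfl fun i' _ => ?_
          show (if i' = i then 1 - ∑ j, A i' j else 0) = _
          split
          · subst ‹i' = i›; rfl
          · rfl
        have h2 : ∑ j : J, B (Sum.inr j) (Sum.inl i) = ∑ j, A i j := rfl
        rw [h1, h2, Finset.sum_ite_eq' (Finset.univ) i (fun _ => 1 - ∑ j, A i j)]
        simp
      · rw [Fintype.sum_sum_type]
        have h1 : ∑ i : I, B (Sum.inl i) (Sum.inr j) = ∑ i, A i j := rfl
        have h2 : ∑ j' : J, B (Sum.inr j') (Sum.inr j)
            = ∑ j' : J, if j' = j then 1 - ∑ i, A i j else 0 := by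
          refine Finset.sum_congr rfl fun j' _ => ?_
          show (if j' = j then 1 - ∑ i, A i j' else 0) = _
          split
          · subst ‹j' = j›; rfl
          · rfl
        rw [h1, h2, Finset.sum_ite_eq' (Finset.univ) j (fun _ => 1 - ∑ i, A i j)]
        simp
  obtain ⟨w', hw'0, hw'1, hw'sum⟩ :=
    exists_eq_sum_perm_of_mem_doublyStochastic hBmem
  set e : Fin (Fintype.card (Equiv.Perm (I ⊕ J))) ≃ Equiv.Perm (I ⊕ J) :=
    (Fintype.equivFin (Equiv.Perm (I ⊕ J))).symm with he
  refine ⟨Fintype.card (Equiv.Perm (I ⊕ J)), fun k => w' (e k),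
    fun k => fun i j => (e k).permMatrix ℝ (Sum.inl i) (Sum.inr j),
    fun k => hw'0 _, ?_, ?_, ?_⟩
  · rw [← hw'1]; exact Fintype.sum_equiv e _ _ (fun k => rfl)
  · intro k
    set σ := e k
    have hent : ∀ x y : I ⊕ J, σ.permMatrix ℝ x y = 0 ∨ σ.permMatrix ℝ x y = 1 := by
      intro x y
      rw [Equiv.Perm.permMatrix, PEquiv.toMatrix_apply]
      split <;> simp
    have hds := permMatrix_mem_doublyStochastic (R := ℝ) (σ := σ)
    rw [mem_doublyStochastic_iff_sum] at hds
    obtain ⟨hpos, hrs, hcs⟩ := hds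
    refine ⟨fun i j => hent _ _, ?_, ?_⟩
    · intro i
      have := hrs (Sum.inl i)
      rw [Fintype.sum_sum_type] at this
      have h2 : 0 ≤ ∑ i', σ.permMatrix ℝ (Sum.inl i) (Sum.inl i') :=
        Finset.sum_nonneg fun _ _ => hpos _ _
      linarith
    · intro j
      have := hcs (Sum.inr j)
      rw [Fintype.sum_sum_type] at this
      have h2 : 0 ≤ ∑ j', σ.permMatrix ℝ (Sum.inr j') (Sum.inr j) :=
        Finset.sum_nonneg fun _ _ => hpos _ _
      linarith
  · funext i j
    have := congrFun (congrFun hw'sum (Sum.inl i)) (Sum.inr j)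
    simp only [Matrix.sum_apply, Matrix.smul_apply, smul_eq_mul] at this ⊢
    rw [show A i j = B (Sum.inl i) (Sum.inr j) from rfl, ← this]
    exact (Fintype.sum_equiv e _ _ (fun k => rfl)).symm
end

section
/- In a finite bipartite graph with left side A and right side Ω, if there exists a matching M₁ that matches every vertex of A, and a matching M₂ that matches every vertex of a subset W ⊆ Ω, then there exists a single matching that simultaneously matches every vertex of A and every vertex of W. -/
/-- Auxiliary inductive set for the Schröder–Bernstein-style construction:
the set of `a : A` on which we use `m₁`. -/
inductive MDC {A Ω : Type} (W : Set Ω) (m₁ : A → Ω) (m₂ : Ω → A) : A → Prop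
  | base (a : A) (h : ¬ ∃ ω ∈ W, m₂ ω = a) : MDC W m₁ m₂ a
  | step (a : A) (h : MDC W m₁ m₂ a) (hw : m₁ a ∈ W) : MDC W m₁ m₂ (m₂ (m₁ a))

/-- In a finite bipartite graph (edge relation `E` between left side `A` and
right side `Ω`), if some matching fully matches `A` (encoded as an injective
choice of a distinct neighbor `m₁ a` for each `a ∈ A`), and some matching fully
matches a subset `W ⊆ Ω` (encoded as an injective-on-`W` choice of a neighbor
`m₂ ω` for each `ω ∈ W`), then there is a single matching that fully matches
both `A` and `W`: an injective `m : A → Ω` along edges whose range covers `W`. -/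
theorem exists_matching_covering_left_and_subset
    {A Ω : Type} [Fintype A] [Fintype Ω] [DecidableEq A] [DecidableEq Ω]
    (E : A → Ω → Prop) (W : Set Ω)
    (m₁ : A → Ω) (hm₁E : ∀ a, E a (m₁ a)) (hm₁inj : Function.Injective m₁)
    (m₂ : Ω → A) (hm₂E : ∀ ω ∈ W, E (m₂ ω) ω) (hm₂inj : Set.InjOn m₂ W) :
    ∃ m : A → Ω, Function.Injective m ∧ (∀ a, E a (m a)) ∧ W ⊆ Set.range m := by
  classical
  set C := MDC W m₁ m₂ with hC
  have hnc : ∀ a, ¬ C a → ∃ ω ∈ W, m₂ ω = a := by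
    intro a h
    by_contra h'
    exact h (MDC.base a h')
  let m : A → Ω := fun a => if h : C a then m₁ a else (hnc a h).choose
  have hmC : ∀ a, C a → m a = m₁ a := fun a h => dif_pos h
  have hmN : ∀ a (h : ¬ C a), m a = (hnc a h).choose := fun a h => dif_neg h
  have hspec : ∀ a (h : ¬ C a), (hnc a h).choose ∈ W ∧ m₂ (hnc a h).choose = a :=
    fun a h => ⟨(hnc a h).choose_spec.1, (hnc a h).choose_spec.2⟩
  refine ⟨m, ?_, ?_, ?_⟩
  · -- injectivity
    intro a b hab
    by_cases ha : C a <;> by_cases hb : C b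
    · exact hm₁inj (by rwa [hmC a ha, hmC b hb] at hab)
    · exfalso
      rw [hmC a ha, hmN b hb] at hab
      obtain ⟨hW, hm2⟩ := hspec b hb
      exact hb (by
        have := MDC.step a ha (hab ▸ hW)
        rwa [hab, hm2] at this)
    · exfalso
      rw [hmN a ha, hmC b hb] at hab
      obtain ⟨hW, hm2⟩ := hspec a ha
      exact ha (by
        have := MDC.step b hb (hab ▸ hW)
        rwa [← hab, hm2] at this)
    · rw [hmN a ha, hmN b hb] at hab
      have h1 := (hspec a ha).2
      have h2 := (hspec b hb).2
      rw [← h1, ← h2, hab]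
  · -- edges
    intro a
    by_cases h : C a
    · rw [hmC a h]; exact hm₁E a
    · rw [hmN a h]
      obtain ⟨hW, hm2⟩ := hspec a h
      have := hm₂E _ hW
      rwa [hm2] at this
  · -- covers W
    intro ω hω
    have key : ∀ a, C a → m₂ ω = a → ω ∈ Set.range m := by
      intro a h
      cases h with
      | base a hne => intro heq; exact absurd ⟨ω, hω, heq⟩ hne
      | step a' ha' hw =>
        intro heq
        have : ω = m₁ a' := hm₂inj hω hw heq
        exact ⟨a', by rw [hmC a' ha', ← this]⟩
    by_cases h : C (m₂ ω)
    · exact key _ h rfl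
    · obtain ⟨hW, hm2⟩ := hspec (m₂ ω) h
      have : (hnc (m₂ ω) h).choose = ω := hm₂inj hW hω hm2
      exact ⟨m₂ ω, by rw [hmN _ h, this]⟩
end

section
/- If a mixed outcome f is compatible with the information structure of a search game, then f can be generated by a fractional allocation: there exist nonnegative numbers α_i(π_i, ω) for each player i, cell π_i ∈ Π_i, and location ω ∈ π_i, with ∑_{ω ∈ π_i} α_i(π_i, ω) ≤ K_i for every cell π_i, such that f(ω) = min(1, ∑_{i∈N} α_i(π_i(ω), ω)) for every location ω. -/
open scoped Classical
noncomputable section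

variable {N Ω : Type}

/-- `P` is a partition of the finite type `Ω` into nonempty, pairwise disjoint cells. -/
def IsPartition [Fintype Ω] [DecidableEq Ω] (P : Finset (Finset Ω)) : Prop :=
  (∀ π ∈ P, π.Nonempty) ∧
  (∀ π ∈ P, ∀ π' ∈ P, π ≠ π' → Disjoint π π') ∧
  (∀ ω : Ω, ∃ π ∈ P, ω ∈ π)

/-- `f` is a valid strategy for player `i`: in every cell it searches a subset of
the cell of size at most the capacity `K i`. -/
def ValidFor [DecidableEq Ω] (Part : N → Finset (Finset Ω)) (K : N → ℕ) (i : N)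
    (f : Finset Ω → Finset Ω) : Prop :=
  ∀ π ∈ Part i, f π ⊆ π ∧ (f π).card ≤ K i

/-- A valid pure strategy profile. -/
def ValidStrat [DecidableEq Ω] (Part : N → Finset (Finset Ω)) (K : N → ℕ)
    (s : N → Finset Ω → Finset Ω) : Prop :=
  ∀ i, ValidFor Part K i (s i)

/-- Player `i` searches location `ω` under profile `s` (when the prize is at `ω`). -/
def searchesAt (Part : N → Finset (Finset Ω)) (s : N → Finset Ω → Finset Ω)
    (i : N) (ω : Ω) : Prop :=
  ∃ π ∈ Part i, ω ∈ π ∧ ω ∈ s i π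

/-- Location `ω` is searched by some player under profile `s`. -/
def searched (Part : N → Finset (Finset Ω)) (s : N → Finset Ω → Finset Ω)
    (ω : Ω) : Prop :=
  ∃ i, searchesAt Part s i ω

/-- The number of players searching `ω` under `s`. -/
def mcount [Fintype N] (Part : N → Finset (Finset Ω))
    (s : N → Finset Ω → Finset Ω) (ω : Ω) : ℕ :=
  (Finset.univ.filter fun i => searchesAt Part s i ω).card

set_option linter.unusedSectionVars false

namespace FracAllocAux

open Finset

variable {N Ω : Type} [Fintype Ω] [DecidableEq Ω]

/-- Max of `y` over `π`, `0` if `π` is empty. -/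
def Mx (y : Ω → ℝ) (π : Finset Ω) : ℝ := if h : π.Nonempty then π.sup' h y else 0

lemma le_Mx {y : Ω → ℝ} {π : Finset Ω} {ω : Ω} (h : ω ∈ π) : y ω ≤ Mx y π := by
  rw [Mx, dif_pos ⟨ω, h⟩]; exact Finset.le_sup' y h

lemma Mx_le {y : Ω → ℝ} {π : Finset Ω} (h : π.Nonempty) {c : ℝ}
    (hc : ∀ ω ∈ π, y ω ≤ c) : Mx y π ≤ c := by
  rw [Mx, dif_pos h]; exact Finset.sup'_le h y hc

lemma Mx_nonneg {y : Ω → ℝ} (hy : ∀ ω, 0 ≤ y ω) {π : Finset Ω} (h : π.Nonempty) :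
    0 ≤ Mx y π := le_trans (hy h.choose) (le_Mx h.choose_spec)

lemma exists_Mx (y : Ω → ℝ) {π : Finset Ω} (h : π.Nonempty) :
    ∃ ω ∈ π, Mx y π = y ω := by
  rw [Mx, dif_pos h]
  obtain ⟨ω, hω, he⟩ := Finset.exists_mem_eq_sup' h y
  exact ⟨ω, hω, he⟩

/-- Layer-cake decomposition of the max. -/
lemma Mx_decomp {y : Ω → ℝ} (hy : ∀ ω, 0 ≤ y ω) {t : ℝ} (ht : 0 < t)
    (hmin : ∀ ω, 0 < y ω → t ≤ y ω) {π : Finset Ω} (hπ : π.Nonempty) :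
    Mx y π = t * (if (π ∩ (univ.filter fun ω => 0 < y ω)).Nonempty then 1 else 0)
      + Mx (fun ω => max (y ω - t) 0) π := by
  by_cases hW : (π ∩ (univ.filter fun ω => 0 < y ω)).Nonempty
  · obtain ⟨ω0, hω0⟩ := hW
    rw [Finset.mem_inter, Finset.mem_filter] at hω0
    have hω0π : ω0 ∈ π := hω0.1
    have hω0pos : 0 < y ω0 := hω0.2.2
    have htle : t ≤ Mx y π := le_trans (hmin ω0 hω0pos) (le_Mx hω0π)
    have key : Mx (fun ω => max (y ω - t) 0) π = Mx y π - t := by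
      apply le_antisymm
      · apply Mx_le hπ
        intro ω hω
        apply max_le
        · exact sub_le_sub_right (le_Mx hω) t
        · linarith
      · obtain ⟨ω1, hω1, he⟩ := exists_Mx y hπ
        calc Mx y π - t = y ω1 - t := by rw [he]
          _ ≤ max (y ω1 - t) 0 := le_max_left _ _
          _ ≤ Mx (fun ω => max (y ω - t) 0) π := le_Mx (y := fun ω => max (y ω - t) 0) hω1
    rw [if_pos]
    · rw [key]; ring
    · exact ⟨ω0, Finset.mem_inter.2 ⟨hω0.1, Finset.mem_filter.2 ⟨Finset.mem_univ _, hω0.2.2⟩⟩⟩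
  · have hz : ∀ ω ∈ π, y ω = 0 := by
      intro ω hω
      by_contra hne
      have : 0 < y ω := lt_of_le_of_ne (hy ω) (Ne.symm hne)
      exact hW ⟨ω, Finset.mem_inter.2 ⟨hω, Finset.mem_filter.2 ⟨Finset.mem_univ _, this⟩⟩⟩
    have h1 : Mx y π = 0 := by
      apply le_antisymm
      · exact Mx_le hπ fun ω hω => (hz ω hω).le
      · exact Mx_nonneg hy hπ
    have h2 : Mx (fun ω => max (y ω - t) 0) π = 0 := by
      apply le_antisymm
      · apply Mx_le hπ
        intro ω hω
        apply max_le
        · rw [hz ω hω]; linarith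
        · rfl
      · exact Mx_nonneg (fun ω => le_max_right _ _) hπ
    rw [if_neg hW, h1, h2]; ring

/-- The key dual inequality, by layer-cake induction on the number of
distinct positive values of `y`. -/
lemma star {N : Type} [Fintype N] (Part : N → Finset (Finset Ω)) (K : N → ℕ)
    (hPart : ∀ i, ∀ π ∈ Part i, π.Nonempty)
    (f : Ω → ℝ)
    (hcompat : ∀ W : Finset Ω, ∑ ω ∈ W, f ω ≤
      ∑ i, (K i : ℝ) * (((Part i).filter fun π => (π ∩ W).Nonempty).card : ℝ)) :
    ∀ n (y : Ω → ℝ), (∀ ω, 0 ≤ y ω) →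
      ((univ.filter fun ω => 0 < y ω).image y).card = n →
      ∑ ω, y ω * f ω ≤ ∑ i, (K i : ℝ) * ∑ π ∈ Part i, Mx y π := by
  intro n
  induction n using Nat.strong_induction_on with
  | _ n ih =>
    intro y hy hcard
    by_cases hW : (univ.filter fun ω => 0 < y ω) = ∅
    · -- y is identically 0
      have hy0 : ∀ ω, y ω = 0 := by
        intro ω
        by_contra hne
        have hpos : 0 < y ω := lt_of_le_of_ne (hy ω) (Ne.symm hne)
        have : ω ∈ (univ.filter fun ω => 0 < y ω) := Finset.mem_filter.2 ⟨Finset.mem_univ _, hpos⟩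
        simp [hW] at this
      have hL : ∑ ω, y ω * f ω = 0 := by
        apply Finset.sum_eq_zero; intro ω _; rw [hy0 ω]; ring
      rw [hL]
      apply Finset.sum_nonneg
      intro i _
      apply mul_nonneg (by positivity)
      exact Finset.sum_nonneg fun π hπ => Mx_nonneg hy (hPart i π hπ)
    · set W : Finset Ω := univ.filter fun ω => 0 < y ω with hWdef
      have hWne : W.Nonempty := Finset.nonempty_iff_ne_empty.2 hW
      have hWimg : (W.image y).Nonempty := hWne.image y
      set t : ℝ := (W.image y).min' hWimg with htdef
      obtain ⟨ω0, hω0W, hω0⟩ := Finset.mem_image.1 ((W.image y).min'_mem hWimg)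
      have ht : 0 < t := by
        rw [htdef, ← hω0]; exact (Finset.mem_filter.1 hω0W).2
      have hmin : ∀ ω, 0 < y ω → t ≤ y ω := by
        intro ω hpos
        exact Finset.min'_le _ _ (Finset.mem_image_of_mem y
          (Finset.mem_filter.2 ⟨Finset.mem_univ _, hpos⟩))
      set y' : Ω → ℝ := fun ω => max (y ω - t) 0 with hy'def
      have hy' : ∀ ω, 0 ≤ y' ω := fun ω => le_max_right _ _
      -- membership characterization of the new support
      have hW' : ∀ ω, (0 < y' ω) ↔ t < y ω := by
        intro ω
        constructor
        · intro h
          by_contra hle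
          push_neg at hle
          have : y' ω = 0 := max_eq_right (by linarith)
          rw [this] at h; exact lt_irrefl 0 h
        · intro h
          have : y' ω = y ω - t := max_eq_left (by linarith)
          rw [this]; linarith
      -- the measure strictly decreases
      have hcard' : (((univ.filter fun ω => 0 < y' ω)).image y').card < n := by
        set W' : Finset Ω := univ.filter fun ω => 0 < y' ω with hW'def
        have himg : W'.image y' = (W'.image y).image (fun v => v - t) := by
          rw [Finset.image_image]
          apply Finset.image_congr
          intro ω hω
          simp only [Function.comp]
          have : t < y ω := (hW' ω).1 (Finset.mem_filter.1 hω).2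
          exact max_eq_left (by linarith)
        have hsub : W'.image y ⊆ (W.image y).erase t := by
          intro v hv
          obtain ⟨ω, hω, rfl⟩ := Finset.mem_image.1 hv
          have hty : t < y ω := (hW' ω).1 (Finset.mem_filter.1 hω).2
          refine Finset.mem_erase.2 ⟨ne_of_gt hty, ?_⟩
          exact Finset.mem_image_of_mem y
            (Finset.mem_filter.2 ⟨Finset.mem_univ _, lt_trans ht hty⟩)
        have h1 : (W'.image y').card = (W'.image y).card := by
          rw [himg]
          exact Finset.card_image_of_injective _ sub_left_injective
        have h2 : (W'.image y).card ≤ ((W.image y).erase t).card := Finset.card_le_card hsub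
        have h3 : ((W.image y).erase t).card < (W.image y).card :=
          Finset.card_erase_lt_of_mem ((W.image y).min'_mem hWimg)
        rw [← hcard]
        calc (W'.image y').card = (W'.image y).card := h1
          _ ≤ ((W.image y).erase t).card := h2
          _ < (W.image y).card := h3
      -- decompose LHS
      have hLHS : ∑ ω, y ω * f ω = t * (∑ ω ∈ W, f ω) + ∑ ω, y' ω * f ω := by
        have hpt : ∀ ω, y ω * f ω = (if ω ∈ W then t * f ω else 0) + y' ω * f ω := by
          intro ω
          by_cases hωW : ω ∈ W
          · have hpos : 0 < y ω := (Finset.mem_filter.1 hωW).2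
            have : y' ω = y ω - t := max_eq_left (by linarith [hmin ω hpos])
            rw [if_pos hωW, this]; ring
          · have : y ω = 0 := by
              by_contra hne
              exact hωW (Finset.mem_filter.2 ⟨Finset.mem_univ _,
                lt_of_le_of_ne (hy ω) (Ne.symm hne)⟩)
            have hz : y' ω = 0 := max_eq_right (by rw [this]; linarith)
            rw [if_neg hωW, this, hz]; ring
        calc ∑ ω, y ω * f ω = ∑ ω, ((if ω ∈ W then t * f ω else 0) + y' ω * f ω) :=
              Finset.sum_congr rfl fun ω _ => hpt ω
          _ = (∑ ω, if ω ∈ W then t * f ω else 0) + ∑ ω, y' ω * f ω :=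
              Finset.sum_add_distrib
          _ = t * (∑ ω ∈ W, f ω) + ∑ ω, y' ω * f ω := by
              rw [Finset.sum_ite_mem, Finset.univ_inter, Finset.mul_sum]
      -- decompose RHS
      have hRHS : ∀ i, ∑ π ∈ Part i, Mx y π =
          t * (((Part i).filter fun π => (π ∩ W).Nonempty).card : ℝ)
            + ∑ π ∈ Part i, Mx y' π := by
        intro i
        have : ∀ π ∈ Part i, Mx y π =
            t * (if (π ∩ W).Nonempty then 1 else 0) + Mx y' π := by
          intro π hπ
          exact Mx_decomp hy ht hmin (hPart i π hπ)
        rw [Finset.sum_congr rfl this, Finset.sum_add_distrib, ← Finset.mul_sum,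
          Finset.sum_boole]
      calc ∑ ω, y ω * f ω = t * (∑ ω ∈ W, f ω) + ∑ ω, y' ω * f ω := hLHS
        _ ≤ t * (∑ i, (K i : ℝ) * (((Part i).filter fun π => (π ∩ W).Nonempty).card : ℝ))
            + ∑ i, (K i : ℝ) * ∑ π ∈ Part i, Mx y' π := by
            apply add_le_add
            · exact mul_le_mul_of_nonneg_left (hcompat W) ht.le
            · exact ih _ hcard' y' hy' rfl
        _ = ∑ i, (K i : ℝ) * ∑ π ∈ Part i, Mx y π := by
            rw [Finset.mul_sum, ← Finset.sum_add_distrib]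
            apply Finset.sum_congr rfl
            intro i _
            rw [hRHS i]; ring

/-- An extreme allocation whose coverage has `y`-weighted total
`∑ i, K i * ∑ π, Mx y π`. -/
lemma exists_witness {N : Type} [Fintype N] (Part : N → Finset (Finset Ω)) (K : N → ℕ)
    (hPart : ∀ i, ∀ π ∈ Part i, π.Nonempty) (y : Ω → ℝ) :
    ∃ α : N → Finset Ω → Ω → ℝ,
      (∀ i π ω, 0 ≤ α i π ω) ∧
      (∀ i π ω, ¬(π ∈ Part i ∧ ω ∈ π) → α i π ω = 0) ∧
      (∀ i, ∀ π ∈ Part i, ∑ ω ∈ π, α i π ω ≤ (K i : ℝ)) ∧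
      (∑ ω, (∑ i, ∑ π ∈ (Part i).filter (fun π => ω ∈ π), α i π ω) * y ω
        = ∑ i, (K i : ℝ) * ∑ π ∈ Part i, Mx y π) := by
  classical
  -- pick an argmax in each cell of each player
  set pk : (π : Finset Ω) → π.Nonempty → Ω :=
    fun π h => (Finset.exists_mem_eq_sup' h y).choose with hpk
  have hpkmem : ∀ (π : Finset Ω) (h : π.Nonempty), pk π h ∈ π :=
    fun π h => (Finset.exists_mem_eq_sup' h y).choose_spec.1
  have hpkval : ∀ (π : Finset Ω) (h : π.Nonempty), Mx y π = y (pk π h) := by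
    intro π h
    rw [Mx, dif_pos h]
    exact (Finset.exists_mem_eq_sup' h y).choose_spec.2
  refine ⟨fun i π ω => if h : π ∈ Part i then
      (if ω = pk π (hPart i π h) then (K i : ℝ) else 0) else 0, ?_, ?_, ?_, ?_⟩
  · intro i π ω
    dsimp only
    by_cases h : π ∈ Part i
    · rw [dif_pos h]
      split <;> positivity
    · rw [dif_neg h]
  · intro i π ω hn
    dsimp only
    by_cases h : π ∈ Part i
    · rw [dif_pos h, if_neg]
      intro he
      exact hn ⟨h, he ▸ hpkmem π (hPart i π h)⟩
    · rw [dif_neg h]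
  · intro i π hπ
    dsimp only
    have : ∑ ω ∈ π, (if h : π ∈ Part i then
        (if ω = pk π (hPart i π h) then (K i : ℝ) else 0) else 0)
        = ∑ ω ∈ π, (if ω = pk π (hPart i π hπ) then (K i : ℝ) else 0) := by
      apply Finset.sum_congr rfl
      intro ω _
      rw [dif_pos hπ]
    rw [this, Finset.sum_ite_eq' π (pk π (hPart i π hπ)) (fun _ => (K i : ℝ)),
      if_pos (hpkmem π (hPart i π hπ))]
  · -- the weighted total
    dsimp only
    rw [Finset.sum_congr rfl (fun ω _ => Finset.sum_mul _ _ (y ω)), Finset.sum_comm]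
    apply Finset.sum_congr rfl
    intro i _
    have hswap : ∑ ω, (∑ π ∈ (Part i).filter (fun π => ω ∈ π),
          (if h : π ∈ Part i then
            (if ω = pk π (hPart i π h) then (K i : ℝ) else 0) else 0)) * y ω
        = ∑ π ∈ Part i, ∑ ω ∈ π,
          (if h : π ∈ Part i then
            (if ω = pk π (hPart i π h) then (K i : ℝ) else 0) else 0) * y ω := by
      have : ∀ ω, (∑ π ∈ (Part i).filter (fun π => ω ∈ π),
            (if h : π ∈ Part i then
              (if ω = pk π (hPart i π h) then (K i : ℝ) else 0) else 0)) * y ω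
          = ∑ π ∈ Part i, (if ω ∈ π then
            (if h : π ∈ Part i then
              (if ω = pk π (hPart i π h) then (K i : ℝ) else 0) else 0) * y ω else 0) := by
        intro ω
        rw [Finset.sum_mul, Finset.sum_filter]
      rw [Finset.sum_congr rfl (fun ω _ => this ω), Finset.sum_comm]
      apply Finset.sum_congr rfl
      intro π _
      rw [Finset.sum_ite_mem, Finset.univ_inter]
    rw [hswap, Finset.mul_sum]
    apply Finset.sum_congr rfl
    intro π hπ
    have hne := hPart i π hπ
    have : ∀ ω ∈ π, (if h : π ∈ Part i then
          (if ω = pk π (hPart i π h) then (K i : ℝ) else 0) else 0) * y ω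
        = (if ω = pk π hne then (K i : ℝ) * y ω else 0) := by
      intro ω _
      rw [dif_pos hπ]
      split <;> simp
    rw [Finset.sum_congr rfl this,
      Finset.sum_ite_eq' π (pk π hne) (fun ω => (K i : ℝ) * y ω),
      if_pos (hpkmem π hne), hpkval π hne]

/-- Main covering lemma: a compatible `f` is dominated by an achievable coverage. -/
lemma exists_cover {N : Type} [Fintype N] (Part : N → Finset (Finset Ω)) (K : N → ℕ)
    (hPart : ∀ i, ∀ π ∈ Part i, π.Nonempty)
    (f : Ω → ℝ) (hf0 : ∀ ω, 0 ≤ f ω)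
    (hcompat : ∀ W : Finset Ω, ∑ ω ∈ W, f ω ≤
      ∑ i, (K i : ℝ) * (((Part i).filter fun π => (π ∩ W).Nonempty).card : ℝ)) :
    ∃ α : N → Finset Ω → Ω → ℝ,
      (∀ i π ω, 0 ≤ α i π ω) ∧
      (∀ i π ω, ¬(π ∈ Part i ∧ ω ∈ π) → α i π ω = 0) ∧
      (∀ i, ∀ π ∈ Part i, ∑ ω ∈ π, α i π ω ≤ (K i : ℝ)) ∧
      (∀ ω, f ω ≤ ∑ i, ∑ π ∈ (Part i).filter (fun π => ω ∈ π), α i π ω) := by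
  classical
  set cov : (N → Finset Ω → Ω → ℝ) → (Ω → ℝ) := fun α ω => ∑ i, ∑ π ∈ (Part i).filter (fun π => ω ∈ π), α i π ω
    with hcov
  set S : Set (N → Finset Ω → Ω → ℝ) := {α | (∀ i π ω, 0 ≤ α i π ω) ∧
      (∀ i π ω, ¬(π ∈ Part i ∧ ω ∈ π) → α i π ω = 0) ∧
      (∀ i, ∀ π ∈ Part i, ∑ ω ∈ π, α i π ω ≤ (K i : ℝ))} with hS
  set C : Set (Ω → ℝ) := cov '' S with hC
  set Q : Set (Ω → ℝ) := {g | ∀ ω, f ω ≤ g ω} with hQ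
  -- it suffices to find a common point of C and Q
  suffices hsuff : ¬ Disjoint C Q by
    rw [Set.not_disjoint_iff] at hsuff
    obtain ⟨g, ⟨α, hαS, hαg⟩, hgQ⟩ := hsuff
    exact ⟨α, hαS.1, hαS.2.1, hαS.2.2, fun ω => (hgQ ω).trans_eq (congrFun hαg ω).symm⟩
  intro hdis
  -- `cov` is continuous
  have hcovcont : Continuous cov := by
    apply continuous_pi
    intro ω
    apply continuous_finset_sum
    intro i _
    apply continuous_finset_sum
    intro π _
    exact (continuous_apply ω).comp ((continuous_apply π).comp (continuous_apply i))
  -- S is compact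
  have hScomp : IsCompact S := by
    have hB : IsCompact (Set.univ.pi fun i : N => Set.univ.pi fun _ : Finset Ω =>
        Set.univ.pi fun _ : Ω => Set.Icc (0 : ℝ) (K i)) :=
      isCompact_univ_pi fun i => isCompact_univ_pi fun _ => isCompact_univ_pi fun _ =>
        isCompact_Icc
    apply hB.of_isClosed_subset
    · -- S is closed
      have h1 : IsClosed {α : N → Finset Ω → Ω → ℝ | ∀ i π ω, 0 ≤ α i π ω} := by
        have : {α : N → Finset Ω → Ω → ℝ | ∀ i π ω, 0 ≤ α i π ω} =
            ⋂ i, ⋂ π, ⋂ ω, {α : N → Finset Ω → Ω → ℝ | 0 ≤ α i π ω} := by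
          ext α; simp [Set.mem_iInter]
        rw [this]
        exact isClosed_iInter fun i => isClosed_iInter fun π => isClosed_iInter fun ω =>
          isClosed_le continuous_const
            ((continuous_apply ω).comp ((continuous_apply π).comp (continuous_apply i)))
      have h2 : IsClosed {α : N → Finset Ω → Ω → ℝ | ∀ i π ω, ¬(π ∈ Part i ∧ ω ∈ π) → α i π ω = 0} := by
        have : {α : N → Finset Ω → Ω → ℝ | ∀ i π ω, ¬(π ∈ Part i ∧ ω ∈ π) → α i π ω = 0} =
            ⋂ i, ⋂ π, ⋂ ω, {α : N → Finset Ω → Ω → ℝ | ¬(π ∈ Part i ∧ ω ∈ π) → α i π ω = 0} := by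
          ext α; simp [Set.mem_iInter]
        rw [this]
        refine isClosed_iInter fun i => isClosed_iInter fun π => isClosed_iInter fun ω => ?_
        by_cases hc : π ∈ Part i ∧ ω ∈ π
        · have : {α : N → Finset Ω → Ω → ℝ | ¬(π ∈ Part i ∧ ω ∈ π) → α i π ω = 0} = Set.univ := by
            ext α; simp [hc]
          rw [this]; exact isClosed_univ
        · have : {α : N → Finset Ω → Ω → ℝ | ¬(π ∈ Part i ∧ ω ∈ π) → α i π ω = 0} = {α : N → Finset Ω → Ω → ℝ | α i π ω = 0} := by
            ext α; simp [hc]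
          rw [this]
          exact isClosed_eq
            ((continuous_apply ω).comp ((continuous_apply π).comp (continuous_apply i)))
            continuous_const
      have h3 : IsClosed {α : N → Finset Ω → Ω → ℝ | ∀ i, ∀ π ∈ Part i, ∑ ω ∈ π, α i π ω ≤ (K i : ℝ)} := by
        have : {α : N → Finset Ω → Ω → ℝ | ∀ i, ∀ π ∈ Part i, ∑ ω ∈ π, α i π ω ≤ (K i : ℝ)} =
            ⋂ i, ⋂ π, {α : N → Finset Ω → Ω → ℝ | π ∈ Part i → ∑ ω ∈ π, α i π ω ≤ (K i : ℝ)} := by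
          ext α; simp [Set.mem_iInter]
        rw [this]
        refine isClosed_iInter fun i => isClosed_iInter fun π => ?_
        by_cases hc : π ∈ Part i
        · have : {α : N → Finset Ω → Ω → ℝ | π ∈ Part i → ∑ ω ∈ π, α i π ω ≤ (K i : ℝ)} =
              {α : N → Finset Ω → Ω → ℝ | ∑ ω ∈ π, α i π ω ≤ (K i : ℝ)} := by
            ext α; simp [hc]
          rw [this]
          exact isClosed_le (continuous_finset_sum _ fun ω _ =>
            (continuous_apply ω).comp ((continuous_apply π).comp (continuous_apply i)))
            continuous_const
        · have : {α : N → Finset Ω → Ω → ℝ | π ∈ Part i → ∑ ω ∈ π, α i π ω ≤ (K i : ℝ)} = Set.univ := by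
            ext α; simp [hc]
          rw [this]; exact isClosed_univ
      have : S = {α : N → Finset Ω → Ω → ℝ | ∀ i π ω, 0 ≤ α i π ω} ∩
          ({α : N → Finset Ω → Ω → ℝ | ∀ i π ω, ¬(π ∈ Part i ∧ ω ∈ π) → α i π ω = 0} ∩
           {α : N → Finset Ω → Ω → ℝ | ∀ i, ∀ π ∈ Part i, ∑ ω ∈ π, α i π ω ≤ (K i : ℝ)}) := by
        ext α
        constructor
        · rintro ⟨p, q, r⟩; exact ⟨p, q, r⟩
        · rintro ⟨p, q, r⟩; exact ⟨p, q, r⟩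
      rw [this]
      exact h1.inter (h2.inter h3)
    · -- S ⊆ B
      intro α hα
      rw [Set.mem_univ_pi]
      intro i
      rw [Set.mem_univ_pi]
      intro π
      rw [Set.mem_univ_pi]
      intro ω
      obtain ⟨hα0, hαz, hαK⟩ := hα
      constructor
      · exact hα0 i π ω
      · by_cases hc : π ∈ Part i ∧ ω ∈ π
        · calc α i π ω ≤ ∑ ω' ∈ π, α i π ω' :=
                Finset.single_le_sum (fun ω' _ => hα0 i π ω') hc.2
            _ ≤ (K i : ℝ) := hαK i π hc.1
        · rw [hαz i π ω hc]; positivity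
  -- C is compact and convex
  have hCcomp : IsCompact C := hScomp.image hcovcont
  have hCconv : Convex ℝ C := by
    rintro c1 ⟨α1, hα1, rfl⟩ c2 ⟨α2, hα2, rfl⟩ a b ha hb hab
    refine ⟨a • α1 + b • α2, ⟨?_, ?_, ?_⟩, ?_⟩
    · intro i π ω
      show 0 ≤ a * α1 i π ω + b * α2 i π ω
      have := hα1.1 i π ω
      have := hα2.1 i π ω
      positivity
    · intro i π ω hn
      show a * α1 i π ω + b * α2 i π ω = 0
      rw [hα1.2.1 i π ω hn, hα2.2.1 i π ω hn]
      ring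
    · intro i π hπ
      show ∑ ω ∈ π, (a * α1 i π ω + b * α2 i π ω) ≤ (K i : ℝ)
      rw [Finset.sum_add_distrib, ← Finset.mul_sum, ← Finset.mul_sum]
      calc a * (∑ ω ∈ π, α1 i π ω) + b * (∑ ω ∈ π, α2 i π ω)
          ≤ a * (K i : ℝ) + b * (K i : ℝ) := by
            apply add_le_add
            · exact mul_le_mul_of_nonneg_left (hα1.2.2 i π hπ) ha
            · exact mul_le_mul_of_nonneg_left (hα2.2.2 i π hπ) hb
        _ = (K i : ℝ) := by rw [← add_mul, hab]; ring
    · funext ω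
      show ∑ i, ∑ π ∈ (Part i).filter (fun π => ω ∈ π), (a * α1 i π ω + b * α2 i π ω)
          = a * cov α1 ω + b * cov α2 ω
      have hpt : ∀ i : N, ∑ π ∈ (Part i).filter (fun π => ω ∈ π),
            (a * α1 i π ω + b * α2 i π ω)
          = a * (∑ π ∈ (Part i).filter (fun π => ω ∈ π), α1 i π ω)
            + b * (∑ π ∈ (Part i).filter (fun π => ω ∈ π), α2 i π ω) := by
        intro i
        rw [Finset.sum_add_distrib, Finset.mul_sum, Finset.mul_sum]
      rw [Finset.sum_congr rfl (fun i _ => hpt i), Finset.sum_add_distrib,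
        ← Finset.mul_sum, ← Finset.mul_sum]
  -- Q is closed and convex
  have hQcl : IsClosed Q := by
    have : Q = ⋂ ω, {g : Ω → ℝ | f ω ≤ g ω} := by
      ext g; simp [hQ, Set.mem_iInter]
    rw [this]
    exact isClosed_iInter fun ω => isClosed_le continuous_const (continuous_apply ω)
  have hQconv : Convex ℝ Q := by
    intro g1 h1 g2 h2 a b ha hb hab
    show ∀ ω, f ω ≤ (a • g1 + b • g2) ω
    intro ω
    show f ω ≤ a * g1 ω + b * g2 ω
    calc f ω = a * f ω + b * f ω := by rw [← add_mul, hab, one_mul]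
      _ ≤ a * g1 ω + b * g2 ω :=
          add_le_add (mul_le_mul_of_nonneg_left (h1 ω) ha)
            (mul_le_mul_of_nonneg_left (h2 ω) hb)
  -- separate
  obtain ⟨g, u, v, hCu, huv, hQv⟩ :=
    geometric_hahn_banach_compact_closed hCconv hCcomp hQconv hQcl hdis
  set y : Ω → ℝ := fun ω => g (fun ω' => if ω = ω' then 1 else 0) with hydef
  have heval : ∀ x : Ω → ℝ, g x = ∑ ω, x ω * y ω := by
    intro x
    conv_lhs => rw [pi_eq_sum_univ x]
    rw [map_sum]
    apply Finset.sum_congr rfl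
    intro ω _
    rw [map_smul, smul_eq_mul]
  have hfQ : f ∈ Q := fun ω => le_refl (f ω)
  have hgf : v < g f := hQv f hfQ
  -- the separating functional is nonnegative
  have hy : ∀ ω, 0 ≤ y ω := by
    intro ω
    by_contra hneg
    push_neg at hneg
    have hne : y ω ≠ 0 := ne_of_lt hneg
    set e : Ω → ℝ := fun ω' => if ω = ω' then 1 else 0 with hedef
    have hypos : 0 < -(y ω) := by linarith
    set t : ℝ := (g f - v) / (-(y ω)) with htdef
    have ht : 0 < t := div_pos (by linarith) hypos
    have hmem : (f + t • e) ∈ Q := by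
      show ∀ ω', f ω' ≤ (f + t • e) ω'
      intro ω'
      show f ω' ≤ f ω' + t * (if ω = ω' then 1 else 0)
      split
      · linarith
      · linarith
    have hval : g (f + t • e) = g f + t * y ω := by
      rw [map_add, map_smul, smul_eq_mul]
    have h5 : g f + t * y ω = v := by
      rw [htdef]
      field_simp
      ring
    have := hQv _ hmem
    rw [hval, h5] at this
    exact lt_irrefl v this
  -- contradiction via the extreme witness and the dual inequality
  obtain ⟨β, hβ0, hβz, hβK, hβtot⟩ := exists_witness Part K hPart y
  have hβC : cov β ∈ C := ⟨β, ⟨hβ0, hβz, hβK⟩, rfl⟩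
  have h1 : g (cov β) < u := hCu _ hβC
  have h2 : g (cov β) = ∑ i, (K i : ℝ) * ∑ π ∈ Part i, Mx y π := by
    rw [heval]
    exact hβtot
  have h3 : g f ≤ g (cov β) := by
    rw [heval f, h2]
    calc ∑ ω, f ω * y ω = ∑ ω, y ω * f ω := by
          apply Finset.sum_congr rfl; intro ω _; ring
      _ ≤ ∑ i, (K i : ℝ) * ∑ π ∈ Part i, Mx y π :=
          star Part K hPart f hcompat _ y hy rfl
  linarith

end FracAllocAux

/-- If a mixed outcome `f` is compatible with the information structure, then it
can be generated by a fractional allocation: nonnegative numbers `α i π ω`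
(for `ω` in the cell `π` of player `i`), each cell allocating at most `K i` in
total, with `f ω = min 1 (∑_i α i (πᵢ(ω)) ω)`. -/
theorem compatible_outcome_generated_by_fractional_allocation
    {N Ω : Type} [Fintype N] [Fintype Ω] [DecidableEq Ω]
    (Part : N → Finset (Finset Ω)) (K : N → ℕ)
    (hPart : ∀ i, IsPartition (Part i))
    (f : Ω → ℝ) (hf0 : ∀ ω, 0 ≤ f ω) (hf1 : ∀ ω, f ω ≤ 1)
    (hcompat : ∀ W : Finset Ω,
      ∑ ω ∈ W, f ω ≤
        ∑ i, (K i : ℝ) *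
          (((Part i).filter fun π => (π ∩ W).Nonempty).card : ℝ)) :
    ∃ α : N → Finset Ω → Ω → ℝ,
      (∀ i, ∀ π ∈ Part i, ∀ ω ∈ π, 0 ≤ α i π ω) ∧
      (∀ i, ∀ π ∈ Part i, ∑ ω ∈ π, α i π ω ≤ (K i : ℝ)) ∧
      (∀ ω : Ω, f ω =
        min 1 (∑ i, ∑ π ∈ (Part i).filter (fun π => ω ∈ π), α i π ω)) := by
  classical
  have hPartNE : ∀ i, ∀ π ∈ Part i, π.Nonempty := fun i => (hPart i).1
  obtain ⟨α, hα0, hαz, hαK, hcov⟩ :=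
    FracAllocAux.exists_cover Part K hPartNE f hf0 hcompat
  set c : Ω → ℝ := fun ω => ∑ i, ∑ π ∈ (Part i).filter (fun π => ω ∈ π), α i π ω
    with hcdef
  have hc0 : ∀ ω, 0 ≤ c ω := fun ω => le_trans (hf0 ω) (hcov ω)
  have hfc : ∀ ω, f ω ≤ c ω := fun ω => hcov ω
  refine ⟨fun i π ω => if 0 < c ω then α i π ω * (f ω / c ω) else 0, ?_, ?_, ?_⟩
  · intro i π hπ ω hω
    dsimp only
    split
    · rename_i h
      have h1 := hα0 i π ω
      have h2 := hf0 ω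
      positivity
    · exact le_refl 0
  · intro i π hπ
    have hle : ∀ ω ∈ π, (if 0 < c ω then α i π ω * (f ω / c ω) else 0) ≤ α i π ω := by
      intro ω _
      split
      · rename_i h
        apply mul_le_of_le_one_right (hα0 i π ω)
        exact div_le_one_of_le₀ (hfc ω) (hc0 ω)
      · exact hα0 i π ω
    exact le_trans (Finset.sum_le_sum hle) (hαK i π hπ)
  · intro ω
    by_cases h : 0 < c ω
    · have hstep : ∑ i, ∑ π ∈ (Part i).filter (fun π => ω ∈ π),
          (if 0 < c ω then α i π ω * (f ω / c ω) else 0)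
          = (∑ i, ∑ π ∈ (Part i).filter (fun π => ω ∈ π), α i π ω) * (f ω / c ω) := by
        simp only [if_pos h]
        rw [Finset.sum_mul]
        apply Finset.sum_congr rfl
        intro i _
        rw [Finset.sum_mul]
      have hceq : (∑ i, ∑ π ∈ (Part i).filter (fun π => ω ∈ π), α i π ω) = c ω := rfl
      rw [hstep, hceq, mul_comm, div_mul_cancel₀ _ (ne_of_gt h)]
      exact (min_eq_right (hf1 ω)).symm
    · have hc : c ω = 0 := le_antisymm (not_lt.1 h) (hc0 ω)
      have hfz : f ω = 0 := le_antisymm (by rw [← hc]; exact hfc ω) (hf0 ω)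
      have hz : ∑ i, ∑ π ∈ (Part i).filter (fun π => ω ∈ π),
          (if 0 < c ω then α i π ω * (f ω / c ω) else 0) = 0 := by
        apply Finset.sum_eq_zero
        intro i _
        apply Finset.sum_eq_zero
        intro π _
        rw [if_neg h]
      rw [hz, hfz]
      norm_num
end
end

section
/- If a mixed outcome f can be generated by a fractional allocation, then f can be induced by a lottery over pure strategy profiles: there is a finitely supported probability distribution over strategy profiles under which, for every location ω, the probability that ω is searched equals f(ω). -/
open scoped Classical
noncomputable section

variable {N Ω : Type}

section AuxSG
set_option linter.unusedSectionVars false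
variable [Fintype N] [Fintype Ω] [DecidableEq Ω]

/-- Slot index type: one slot per unit of capacity of each cell of each player. -/
abbrev SGSlot (Part : N → Finset (Finset Ω)) (K : N → ℕ) : Type :=
  Σ i : N, {π : Finset Ω // π ∈ Part i} × Fin (K i)

/-- The (slot, location) block of the big matrix. -/
noncomputable def SGrow (Part : N → Finset (Finset Ω)) (K : N → ℕ)
    (x : N → Finset Ω → Ω → ℝ) (r : SGSlot Part K) (ω : Ω) : ℝ :=
  if ω ∈ (r.2.1 : Finset Ω) then x r.1 (r.2.1 : Finset Ω) ω / (K r.1) else 0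

/-- The big doubly stochastic matrix. -/
noncomputable def SGmat (Part : N → Finset (Finset Ω)) (K : N → ℕ)
    (x : N → Finset Ω → Ω → ℝ) :
    Matrix (SGSlot Part K ⊕ Ω) (SGSlot Part K ⊕ Ω) ℝ := fun a b =>
  match a, b with
  | Sum.inl r, Sum.inl r' => if r = r' then 1 - ∑ ω, SGrow Part K x r ω else 0
  | Sum.inl r, Sum.inr ω => SGrow Part K x r ω
  | Sum.inr ω, Sum.inl r => SGrow Part K x r ω
  | Sum.inr ω, Sum.inr ω' => if ω = ω' then 1 - ∑ r, SGrow Part K x r ω else 0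

/-- The pure strategy profile associated to a permutation of `SGSlot ⊕ Ω`. -/
noncomputable def SGstrat (Part : N → Finset (Finset Ω)) (K : N → ℕ)
    (σ : Equiv.Perm (SGSlot Part K ⊕ Ω)) : N → Finset Ω → Finset Ω :=
  fun i π => π.filter fun ω => ∃ r : SGSlot Part K,
    r.1 = i ∧ (r.2.1 : Finset Ω) = π ∧ σ (Sum.inl r) = Sum.inr ω

lemma SGstrat_mem (Part : N → Finset (Finset Ω)) (K : N → ℕ)
    (σ : Equiv.Perm (SGSlot Part K ⊕ Ω)) (i : N) (π : Finset Ω) (ω : Ω) :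
    ω ∈ SGstrat Part K σ i π ↔ ω ∈ π ∧ ∃ r : SGSlot Part K,
      r.1 = i ∧ (r.2.1 : Finset Ω) = π ∧ σ (Sum.inl r) = Sum.inr ω := by
  rw [SGstrat]
  exact Finset.mem_filter

lemma SGstrat_subset (Part : N → Finset (Finset Ω)) (K : N → ℕ)
    (σ : Equiv.Perm (SGSlot Part K ⊕ Ω)) (i : N) (π : Finset Ω) :
    SGstrat Part K σ i π ⊆ π := by
  rw [SGstrat]
  exact Finset.filter_subset _ _

end AuxSG

/-- If a mixed outcome `f` is generated by a fractional allocation, then `f`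
can be induced by a lottery over pure strategy profiles: a finitely supported
probability distribution over (valid) profiles under which, for every location
`ω`, the probability that `ω` is searched equals `f ω`. -/
theorem fractional_allocation_outcome_induced_by_lottery
    {N Ω : Type} [Fintype N] [Fintype Ω] [DecidableEq Ω]
    (Part : N → Finset (Finset Ω)) (K : N → ℕ)
    (hPart : ∀ i, IsPartition (Part i))
    (α : N → Finset Ω → Ω → ℝ)
    (hα_nonneg : ∀ i, ∀ π ∈ Part i, ∀ ω ∈ π, 0 ≤ α i π ω)
    (hα_cap : ∀ i, ∀ π ∈ Part i, ∑ ω ∈ π, α i π ω ≤ (K i : ℝ))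
    (f : Ω → ℝ)
    (hf : ∀ ω : Ω, f ω =
      min 1 (∑ i, ∑ π ∈ (Part i).filter (fun π => ω ∈ π), α i π ω)) :
    ∃ p : (N → Finset Ω → Finset Ω) → ℝ,
      (∀ s, 0 ≤ p s) ∧
      (∑ s : N → Finset Ω → Finset Ω, p s = 1) ∧
      (∀ s, p s ≠ 0 → ValidStrat Part K s) ∧
      (∀ ω : Ω, f ω =
        ∑ s : N → Finset Ω → Finset Ω,
          p s * (if searched Part s ω then 1 else 0)) := by
  classical
  haveI : DecidableEq (SGSlot Part K ⊕ Ω) := Classical.decEq _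
  set T : Ω → ℝ := fun ω => ∑ i, ∑ π ∈ (Part i).filter (fun π => ω ∈ π), α i π ω with hTdef
  have hT0 : ∀ ω, 0 ≤ T ω := by
    intro ω
    refine Finset.sum_nonneg fun i _ => Finset.sum_nonneg fun π hπ => ?_
    rw [Finset.mem_filter] at hπ
    exact hα_nonneg i π hπ.1 ω hπ.2
  set c : Ω → ℝ := fun ω => if T ω ≤ 1 then 1 else (T ω)⁻¹ with hcdef
  have hc0 : ∀ ω, 0 ≤ c ω := by
    intro ω
    by_cases h : T ω ≤ 1
    · simp only [hcdef, if_pos h]; norm_num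
    · simp only [hcdef, if_neg h]; exact inv_nonneg.2 (hT0 ω)
  have hc1 : ∀ ω, c ω ≤ 1 := by
    intro ω
    by_cases h : T ω ≤ 1
    · simp only [hcdef, if_pos h]; exact le_rfl
    · simp only [hcdef, if_neg h]
      push_neg at h
      exact inv_le_one_of_one_le₀ h.le
  have hcT : ∀ ω, T ω * c ω = min 1 (T ω) := by
    intro ω
    by_cases h : T ω ≤ 1
    · simp only [hcdef, if_pos h]; rw [mul_one, min_eq_right h]
    · simp only [hcdef, if_neg h]
      push_neg at h
      rw [mul_inv_cancel₀ (by linarith), min_eq_left h.le]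
  set x : N → Finset Ω → Ω → ℝ := fun i π ω => α i π ω * c ω with hxdef
  have hx0 : ∀ i, ∀ π ∈ Part i, ∀ ω ∈ π, 0 ≤ x i π ω := fun i π hπ ω hω =>
    mul_nonneg (hα_nonneg i π hπ ω hω) (hc0 ω)
  have hxle : ∀ i, ∀ π ∈ Part i, ∀ ω ∈ π, x i π ω ≤ α i π ω := fun i π hπ ω hω =>
    mul_le_of_le_one_right (hα_nonneg i π hπ ω hω) (hc1 ω)
  -- capacity sums
  have hxcap : ∀ i, ∀ π ∈ Part i, ∑ ω ∈ π, x i π ω ≤ (K i : ℝ) := by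
    intro i π hπ
    exact le_trans (Finset.sum_le_sum fun ω hω => hxle i π hπ ω hω) (hα_cap i π hπ)
  have hKx : ∀ i, ∀ π ∈ Part i, ∀ ω ∈ π, (K i : ℝ) * (x i π ω / (K i : ℝ)) = x i π ω := by
    intro i π hπ ω hω
    rcases Nat.eq_zero_or_pos (K i) with h0 | hpos
    · have hs : ∑ ω' ∈ π, α i π ω' ≤ 0 := by
        have := hα_cap i π hπ; rwa [h0, Nat.cast_zero] at this
      have hα0 : α i π ω = 0 := by
        have h1 : ∑ ω' ∈ π, α i π ω' = 0 :=
          le_antisymm hs (Finset.sum_nonneg fun ω' hω' => hα_nonneg i π hπ ω' hω')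
        exact (Finset.sum_eq_zero_iff_of_nonneg
          (fun ω' hω' => hα_nonneg i π hπ ω' hω')).1 h1 ω hω
      simp [hxdef, hα0]
    · have : (K i : ℝ) ≠ 0 := by positivity
      field_simp
  have hrow0 : ∀ r : SGSlot Part K, ∀ ω, 0 ≤ SGrow Part K x r ω := by
    intro r ω
    unfold SGrow
    split
    · rename_i h
      exact div_nonneg (hx0 r.1 r.2.1 r.2.1.2 ω h) (Nat.cast_nonneg _)
    · exact le_rfl
  have hRS : ∀ r : SGSlot Part K, ∑ ω, SGrow Part K x r ω ≤ 1 := by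
    intro r
    obtain ⟨i, π, k⟩ := r
    have hK1 : (1:ℝ) ≤ (K i : ℝ) := by
      have := k.isLt
      exact_mod_cast Nat.one_le_iff_ne_zero.2 (by omega)
    have hsum : ∑ ω, SGrow Part K x ⟨i, (π, k)⟩ ω
        = (∑ ω ∈ (π : Finset Ω), x i (π : Finset Ω) ω) / (K i : ℝ) := by
      simp only [SGrow]
      rw [Finset.sum_ite_mem, Finset.univ_inter, Finset.sum_div]
    rw [hsum, div_le_one (by linarith)]
    exact hxcap i π π.2
  have hCS : ∀ ω, ∑ r : SGSlot Part K, SGrow Part K x r ω = f ω := by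
    intro ω
    have h2 : ∀ i : N, ∑ p : {π : Finset Ω // π ∈ Part i} × Fin (K i),
        SGrow Part K x ⟨i, p⟩ ω
        = ∑ π ∈ (Part i).filter (fun π => ω ∈ π), x i π ω := by
      intro i
      rw [Fintype.sum_prod_type]
      have h3 : ∀ π' : {π : Finset Ω // π ∈ Part i},
          ∑ k : Fin (K i), SGrow Part K x ⟨i, (π', k)⟩ ω
          = if ω ∈ (π' : Finset Ω) then x i (π' : Finset Ω) ω else 0 := by
        intro π'
        simp only [SGrow]
        rw [Finset.sum_const, Finset.card_univ, Fintype.card_fin, nsmul_eq_mul,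
          mul_ite, mul_zero]
        by_cases h : ω ∈ (π' : Finset Ω)
        · rw [if_pos h, if_pos h, hKx i π' π'.2 ω h]
        · rw [if_neg h, if_neg h]
      simp_rw [h3]
      rw [Finset.sum_filter]
      exact Finset.sum_coe_sort (Part i) (fun π => if ω ∈ π then x i π ω else 0)
    calc ∑ r : SGSlot Part K, SGrow Part K x r ω
        = ∑ i : N, ∑ p : {π : Finset Ω // π ∈ Part i} × Fin (K i),
            SGrow Part K x ⟨i, p⟩ ω := by
          rw [← Finset.univ_sigma_univ, Finset.sum_sigma]
      _ = ∑ i : N, ∑ π ∈ (Part i).filter (fun π => ω ∈ π), x i π ω :=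
          Finset.sum_congr rfl fun i _ => h2 i
      _ = (∑ i : N, ∑ π ∈ (Part i).filter (fun π => ω ∈ π), α i π ω) * c ω := by
          rw [Finset.sum_mul]
          exact Finset.sum_congr rfl fun i _ => by
            rw [Finset.sum_mul]
      _ = T ω * c ω := by rw [hTdef]
      _ = min 1 (T ω) := hcT ω
      _ = f ω := (hf ω).symm
  have hrowsum : ∀ a, ∑ b, SGmat Part K x a b = 1 := by
    intro a
    cases a with
    | inl r =>
      rw [Fintype.sum_sum_type]
      have e1 : ∑ r' : SGSlot Part K, SGmat Part K x (Sum.inl r) (Sum.inl r')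
          = 1 - ∑ ω, SGrow Part K x r ω := by
        rw [Finset.sum_eq_single_of_mem r (Finset.mem_univ r)]
        · simp [SGmat]
        · intro r' _ hne
          simp only [SGmat]
          rw [if_neg (Ne.symm hne)]
      have e2 : ∑ ω : Ω, SGmat Part K x (Sum.inl r) (Sum.inr ω)
          = ∑ ω, SGrow Part K x r ω := rfl
      rw [e1, e2]; ring
    | inr ω =>
      rw [Fintype.sum_sum_type]
      have e1 : ∑ r : SGSlot Part K, SGmat Part K x (Sum.inr ω) (Sum.inl r)
          = ∑ r, SGrow Part K x r ω := rfl
      have e2 : ∑ ω' : Ω, SGmat Part K x (Sum.inr ω) (Sum.inr ω')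
          = 1 - ∑ r, SGrow Part K x r ω := by
        rw [Finset.sum_eq_single_of_mem ω (Finset.mem_univ ω)]
        · simp [SGmat]
        · intro ω' _ hne
          simp only [SGmat]
          rw [if_neg (Ne.symm hne)]
      rw [e1, e2]; ring
  have hsym : ∀ a b, SGmat Part K x a b = SGmat Part K x b a := by
    rintro (r | ω) (r' | ω')
    · simp only [SGmat]
      by_cases h : r = r'
      · subst h; rfl
      · rw [if_neg h, if_neg (Ne.symm h)]
    · rfl
    · rfl
    · simp only [SGmat]
      by_cases h : ω = ω'
      · subst h; rfl
      · rw [if_neg h, if_neg (Ne.symm h)]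
  have hmemDS : SGmat Part K x ∈ doublyStochastic ℝ (SGSlot Part K ⊕ Ω) := by
    rw [mem_doublyStochastic_iff_sum]
    refine ⟨?_, hrowsum, fun b => ?_⟩
    · rintro (r | ω) (r' | ω')
      · simp only [SGmat]
        split
        · have := hRS r; linarith
        · exact le_rfl
      · exact hrow0 r ω'
      · exact hrow0 r' ω
      · simp only [SGmat]
        split
        · have h1 := hCS ω
          have h2 : f ω ≤ 1 := by rw [hf]; exact min_le_left _ _
          rw [h1]; linarith
        · exact le_rfl
    · calc ∑ a, SGmat Part K x a b = ∑ a, SGmat Part K x b a :=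
            Finset.sum_congr rfl fun a _ => hsym a b
        _ = 1 := hrowsum b
  obtain ⟨w, hw0, hw1, hwM⟩ := exists_eq_sum_perm_of_mem_doublyStochastic hmemDS
  have hperm : ∀ (σ : Equiv.Perm (SGSlot Part K ⊕ Ω)) a b,
      σ.permMatrix ℝ a b = if σ a = b then (1:ℝ) else 0 := by
    intro σ a b
    simp [Equiv.Perm.permMatrix, PEquiv.toMatrix_apply, Equiv.toPEquiv_apply,
      eq_comm]
  have hentry : ∀ (r : SGSlot Part K) (ω : Ω),
      ∑ σ : Equiv.Perm (SGSlot Part K ⊕ Ω),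
        w σ * (if σ (Sum.inl r) = Sum.inr ω then (1:ℝ) else 0)
        = SGrow Part K x r ω := by
    intro r ω
    calc ∑ σ : Equiv.Perm (SGSlot Part K ⊕ Ω),
          w σ * (if σ (Sum.inl r) = Sum.inr ω then (1:ℝ) else 0)
        = ∑ σ : Equiv.Perm (SGSlot Part K ⊕ Ω),
            (w σ • σ.permMatrix ℝ) (Sum.inl r) (Sum.inr ω) := by
          refine Finset.sum_congr rfl fun σ _ => ?_
          rw [Matrix.smul_apply, hperm, smul_eq_mul]
      _ = (∑ σ : Equiv.Perm (SGSlot Part K ⊕ Ω), w σ • σ.permMatrix ℝ)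
            (Sum.inl r) (Sum.inr ω) := (Matrix.sum_apply _ _ _ _).symm
      _ = SGmat Part K x (Sum.inl r) (Sum.inr ω) := by rw [hwM]
      _ = SGrow Part K x r ω := rfl
  have hvalid : ∀ σ, ValidStrat Part K (SGstrat Part K σ) := by
    intro σ i π hπ
    refine ⟨SGstrat_subset Part K σ i π, ?_⟩
    rcases Nat.eq_zero_or_pos (K i) with h0 | hpos
    · have hempty : SGstrat Part K σ i π = ∅ := by
        rw [Finset.eq_empty_iff_forall_notMem]
        intro ω hω
        obtain ⟨-, r, hr1, hr2, hr3⟩ := (SGstrat_mem Part K σ i π ω).1 hω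
        have hlt := r.2.2.isLt
        have hKr : K r.1 = 0 := by rw [hr1, h0]
        omega
      rw [hempty]
      simp
    · have hex : ∀ ω ∈ SGstrat Part K σ i π, ∃ k : Fin (K i),
          σ (Sum.inl ⟨i, (⟨π, hπ⟩, k)⟩) = Sum.inr ω := by
        intro ω hω
        obtain ⟨-, r, hr1, hr2, hr3⟩ := (SGstrat_mem Part K σ i π ω).1 hω
        obtain ⟨i', π', k'⟩ := r
        have hi : i' = i := hr1
        subst hi
        have hπ' : π' = ⟨π, hπ⟩ := Subtype.ext hr2
        subst hπ'
        exact ⟨k', hr3⟩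
      have hcard : (SGstrat Part K σ i π).card
          ≤ (Finset.univ : Finset (Fin (K i))).card := by
        apply Finset.card_le_card_of_injOn
          (fun ω => if h : ∃ k : Fin (K i),
              σ (Sum.inl ⟨i, (⟨π, hπ⟩, k)⟩) = Sum.inr ω then h.choose
            else ⟨0, hpos⟩)
          (fun ω _ => Finset.mem_univ _)
        intro ω hω ω' hω' hg
        have h1 := hex ω (Finset.mem_coe.1 hω)
        have h2 := hex ω' (Finset.mem_coe.1 hω')
        dsimp only at hg
        rw [dif_pos h1, dif_pos h2] at hg
        have e1 := h1.choose_spec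
        have e2 := h2.choose_spec
        rw [hg] at e1
        have := e1.symm.trans e2
        exact Sum.inr.inj this
      simpa using hcard
  have hsear : ∀ (σ : Equiv.Perm (SGSlot Part K ⊕ Ω)) ω,
      searched Part (SGstrat Part K σ) ω ↔
      ∃ r : SGSlot Part K, ω ∈ (r.2.1 : Finset Ω) ∧ σ (Sum.inl r) = Sum.inr ω := by
    intro σ ω
    constructor
    · rintro ⟨i, π, hπ, hωπ, hmem⟩
      obtain ⟨-, r, hr1, hr2, hr3⟩ := (SGstrat_mem Part K σ i π ω).1 hmem
      exact ⟨r, by rw [hr2]; exact hωπ, hr3⟩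
    · rintro ⟨r, hr1, hr2⟩
      refine ⟨r.1, r.2.1, r.2.1.2, hr1, ?_⟩
      rw [SGstrat_mem]
      exact ⟨hr1, r, rfl, rfl, hr2⟩
  have hind : ∀ (σ : Equiv.Perm (SGSlot Part K ⊕ Ω)) ω,
      (if searched Part (SGstrat Part K σ) ω then (1:ℝ) else 0)
      = ∑ r : SGSlot Part K,
          if ω ∈ (r.2.1 : Finset Ω) ∧ σ (Sum.inl r) = Sum.inr ω then (1:ℝ) else 0 := by
    intro σ ω
    by_cases h : searched Part (SGstrat Part K σ) ω
    · rw [if_pos h]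
      obtain ⟨r₀, hr₀⟩ := (hsear σ ω).1 h
      rw [Finset.sum_eq_single_of_mem r₀ (Finset.mem_univ _)]
      · rw [if_pos hr₀]
      · intro r _ hne
        rw [if_neg]
        rintro ⟨h1, h2⟩
        exact hne (Sum.inl.inj (σ.injective (h2.trans hr₀.2.symm)))
    · rw [if_neg h]
      symm
      apply Finset.sum_eq_zero
      intro r _
      rw [if_neg]
      rintro ⟨h1, h2⟩
      exact h ((hsear σ ω).2 ⟨r, h1, h2⟩)
  refine ⟨fun s => ∑ σ ∈ Finset.univ.filter (fun σ => SGstrat Part K σ = s), w σ,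
    ?_, ?_, ?_, ?_⟩
  · intro s
    exact Finset.sum_nonneg fun σ _ => hw0 σ
  · exact (Finset.sum_fiberwise _ _ _).trans hw1
  · intro s hs
    obtain ⟨σ, hσmem, -⟩ := Finset.exists_ne_zero_of_sum_ne_zero hs
    rw [← (Finset.mem_filter.1 hσmem).2]
    exact hvalid σ
  · intro ω
    have key : ∑ σ : Equiv.Perm (SGSlot Part K ⊕ Ω),
        w σ * (if searched Part (SGstrat Part K σ) ω then (1:ℝ) else 0) = f ω := by
      calc ∑ σ : Equiv.Perm (SGSlot Part K ⊕ Ω),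
            w σ * (if searched Part (SGstrat Part K σ) ω then (1:ℝ) else 0)
          = ∑ σ : Equiv.Perm (SGSlot Part K ⊕ Ω), ∑ r : SGSlot Part K,
              w σ * (if ω ∈ (r.2.1 : Finset Ω) ∧ σ (Sum.inl r) = Sum.inr ω
                then (1:ℝ) else 0) := by
            refine Finset.sum_congr rfl fun σ _ => ?_
            rw [hind σ ω, Finset.mul_sum]
        _ = ∑ r : SGSlot Part K, ∑ σ : Equiv.Perm (SGSlot Part K ⊕ Ω),
              w σ * (if ω ∈ (r.2.1 : Finset Ω) ∧ σ (Sum.inl r) = Sum.inr ω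
                then (1:ℝ) else 0) := Finset.sum_comm
        _ = ∑ r : SGSlot Part K, SGrow Part K x r ω := by
            refine Finset.sum_congr rfl fun r _ => ?_
            by_cases hmem : ω ∈ (r.2.1 : Finset Ω)
            · have hiff : ∀ σ : Equiv.Perm (SGSlot Part K ⊕ Ω),
                  (if ω ∈ (r.2.1 : Finset Ω) ∧ σ (Sum.inl r) = Sum.inr ω
                    then (1:ℝ) else 0)
                  = (if σ (Sum.inl r) = Sum.inr ω then (1:ℝ) else 0) := by
                intro σ
                simp [hmem]
              simp_rw [hiff]
              exact hentry r ω
            · have hz : SGrow Part K x r ω = 0 := by rw [SGrow, if_neg hmem]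
              rw [hz]
              apply Finset.sum_eq_zero
              intro σ _
              rw [if_neg (fun hc => hmem hc.1), mul_zero]
        _ = f ω := hCS ω
    rw [← key,
      ← Finset.sum_fiberwise Finset.univ (SGstrat Part K)
        (fun σ => w σ * (if searched Part (SGstrat Part K σ) ω then (1:ℝ) else 0))]
    refine Finset.sum_congr rfl fun s _ => ?_
    rw [Finset.sum_mul]
    refine Finset.sum_congr rfl fun σ hσ => ?_
    rw [(Finset.mem_filter.1 hσ).2]
end
end

section
/- In a search game, if there exists a compatible mixed outcome f, then the socially optimal payoff satisfies U_opt ≥ ∑_{ω∈Ω} f(ω)·μ(ω)·v_s(ω), where μ is the common prior and v_s the social value function. -/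
/-!
Call a set `S` of locations independent if `#W ≤ capacity W` for all `W ⊆ S`, where
`capacity W = ∑ i, K i * #{π ∈ Part i | π meets W}` counts the search slots available to `W`;
by Hall's theorem some valid profile searches all of an independent set. These sets form a
transversal matroid, and compatibility says `f` lies in its independence polytope: if `S` is a
maximal independent subset of `A`, the sets `W` with `capacity W ≤ #(W ∩ S)` are closed under
union (capacity is submodular) and cover `A \ S`, whence `∑ x ∈ A, f x ≤ #S`. The greedy
algorithm, run in order of decreasing weight `w = μ * vs`, then yields an independent `S` with
`∑ x, f x * w x ≤ ∑ x ∈ S, w x`: every prefix `A` of the order meets `S` in a maximal independent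
subset of `A`, and the bound for each threshold `m ≤ min_A w` on the weights `w - m` passes from a
prefix to the next one.
-/

open scoped Classical
noncomputable section

variable {N Ω : Type}

open Finset

section Greedy

variable {α : Type*} [DecidableEq α]

def IsMaxIndepIn (Indep : Finset α → Prop) (A S : Finset α) : Prop :=
  S ⊆ A ∧ Indep S ∧ ∀ x ∈ A, x ∉ S → ¬ Indep (insert x S)

theorem exists_isMaxIndepIn_sum_mul_sub_le (Indep : Finset α → Prop) (hempty : Indep ∅)
    (hsubset : ∀ ⦃S T⦄, T ⊆ S → Indep S → Indep T) {f : α → ℝ} (hf1 : ∀ x, f x ≤ 1)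
    (hrank : ∀ A S, IsMaxIndepIn Indep A S → ∑ x ∈ A, f x ≤ #S) (w : α → ℝ) (A : Finset α) :
    ∃ S, IsMaxIndepIn Indep A S ∧
      ∀ m, (∀ x ∈ A, m ≤ w x) → ∑ x ∈ A, f x * (w x - m) ≤ ∑ x ∈ S, (w x - m) := by
  induction A using Finset.induction_on_min_value w with
  | empty => exact ⟨∅, ⟨subset_rfl, hempty, by simp⟩, by simp⟩
  | insert a A haA hmin ih =>
    obtain ⟨S, ⟨hSA, hS, hmax⟩, hsum⟩ := ih
    have haS : a ∉ S := fun h => haA (hSA h)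
    by_cases hindep : Indep (insert a S)
    · refine ⟨insert a S, ⟨insert_subset_insert a hSA, hindep, ?_⟩, fun m hm => ?_⟩
      · intro x hx hxS hx'
        rw [mem_insert, not_or] at hxS
        refine hmax x ((mem_insert.1 hx).resolve_left hxS.1) hxS.2 (hsubset ?_ hx')
        exact insert_subset_insert x (subset_insert a S)
      · have hfa : f a * (w a - m) ≤ w a - m :=
          mul_le_of_le_one_left (sub_nonneg.2 (hm a (mem_insert_self a A))) (hf1 a)
        rw [sum_insert haA, sum_insert haS]
        linarith [hsum m fun x hx => hm x (mem_insert_of_mem hx)]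
    · have hmax' : IsMaxIndepIn Indep (insert a A) S := by
        refine ⟨hSA.trans (subset_insert a A), hS, fun x hx hxS => ?_⟩
        rcases mem_insert.1 hx with rfl | hx
        exacts [hindep, hmax x hx hxS]
      refine ⟨S, hmax', fun m hm => ?_⟩
      -- raising the threshold from `m` to `w a` changes the two sides by
      -- `(w a - m) * ∑ x ∈ insert a A, f x ≤ (w a - m) * #S`, by `hrank`
      have hshift : ∀ B : Finset α, ∑ x ∈ B, f x * (w x - m)
          = ∑ x ∈ B, f x * (w x - w a) + (w a - m) * ∑ x ∈ B, f x := by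
        intro B
        rw [mul_sum, ← sum_add_distrib]
        exact sum_congr rfl fun x _ => by ring
      have hcard : ∑ x ∈ S, (w x - m) = ∑ x ∈ S, (w x - w a) + (w a - m) * #S := by
        simp only [sum_sub_distrib, sum_const, nsmul_eq_mul]
        ring
      have hwa : m ≤ w a := hm a (mem_insert_self a A)
      have hrest := hsum (w a) hmin
      have hrk := mul_le_mul_of_nonneg_left (hrank _ _ hmax') (sub_nonneg.2 hwa)
      rw [hshift, sum_insert haA, hcard, sub_self, mul_zero, zero_add]
      linarith

end Greedy

section Capacity

variable [Fintype N] [DecidableEq Ω] (Part : N → Finset (Finset Ω)) (K : N → ℕ)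

/-- A slot `⟨i, π, k⟩` is the `k`-th of the `K i` locations player `i` may search in the cell `π`. -/
def slotsAt (ω : Ω) : Finset (Σ _ : N, Finset Ω × ℕ) :=
  univ.sigma fun i => (Part i).filter (ω ∈ ·) ×ˢ range (K i)

def capacity (W : Finset Ω) : ℕ := #(W.biUnion (slotsAt Part K))

def IsIndep (S : Finset Ω) : Prop := ∀ W ⊆ S, #W ≤ capacity Part K W

variable {Part K}

theorem mem_slotsAt {ω : Ω} {x : Σ _ : N, Finset Ω × ℕ} :
    x ∈ slotsAt Part K ω ↔ x.2.1 ∈ Part x.1 ∧ ω ∈ x.2.1 ∧ x.2.2 < K x.1 := by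
  simp [slotsAt, and_assoc]

theorem capacity_eq_sum (W : Finset Ω) :
    capacity Part K W = ∑ i, K i * #((Part i).filter fun π => (π ∩ W).Nonempty) := by
  have hslots : W.biUnion (slotsAt Part K)
      = univ.sigma fun i => (Part i).filter (fun π => (π ∩ W).Nonempty) ×ˢ range (K i) := by
    ext ⟨i, π, k⟩
    simp only [mem_biUnion, mem_slotsAt, mem_sigma, mem_univ, mem_product, mem_filter, mem_range,
      Finset.Nonempty, mem_inter]
    grind
  rw [capacity, hslots, card_sigma]
  exact sum_congr rfl fun i _ => by rw [card_product, card_range, mul_comm]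

theorem capacity_mono {A B : Finset Ω} (h : A ⊆ B) : capacity Part K A ≤ capacity Part K B :=
  card_le_card (biUnion_subset_biUnion_of_subset_left _ h)

theorem capacity_union_add_capacity_inter_le (A B : Finset Ω) :
    capacity Part K (A ∪ B) + capacity Part K (A ∩ B) ≤ capacity Part K A + capacity Part K B := by
  have hinter : (A ∩ B).biUnion (slotsAt Part K) ⊆
      A.biUnion (slotsAt Part K) ∩ B.biUnion (slotsAt Part K) :=
    subset_inter (biUnion_subset_biUnion_of_subset_left _ inter_subset_left)
      (biUnion_subset_biUnion_of_subset_left _ inter_subset_right)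
  rw [capacity, capacity, capacity, capacity, union_biUnion,
    ← card_union_add_card_inter (A.biUnion _)]
  exact Nat.add_le_add_left (card_le_card hinter) _

theorem isIndep_empty : IsIndep Part K ∅ := fun W hW => by simp [subset_empty.1 hW]

theorem IsIndep.subset {S T : Finset Ω} (hT : T ⊆ S) (hS : IsIndep Part K S) :
    IsIndep Part K T := fun W hW => hS W (hW.trans hT)

theorem IsIndep.capacity_union_le {S U W : Finset Ω} (hS : IsIndep Part K S)
    (hU : capacity Part K U ≤ #(U ∩ S)) (hW : capacity Part K W ≤ #(W ∩ S)) :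
    capacity Part K (U ∪ W) ≤ #((U ∪ W) ∩ S) := by
  have hsub := capacity_union_add_capacity_inter_le (Part := Part) (K := K) U W
  have hinter : #(U ∩ W ∩ S) ≤ capacity Part K (U ∩ W) :=
    (hS _ inter_subset_right).trans (capacity_mono inter_subset_left)
  have hcard := card_union_add_card_inter (U ∩ S) (W ∩ S)
  rw [← union_inter_distrib_right, ← inter_inter_distrib_right] at hcard
  omega

theorem IsIndep.capacity_sup_le {ι : Type*} {S : Finset Ω} (hS : IsIndep Part K S)
    (s : Finset ι) {W : ι → Finset Ω} (hW : ∀ i ∈ s, capacity Part K (W i) ≤ #(W i ∩ S)) :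
    capacity Part K (s.sup W) ≤ #(s.sup W ∩ S) :=
  sup_induction (p := fun U => capacity Part K U ≤ #(U ∩ S)) (by simp [capacity])
    (fun _ hU _ hW => hS.capacity_union_le hU hW) hW

theorem IsIndep.exists_mem_capacity_le_of_not_isIndep_insert {S : Finset Ω} {x : Ω}
    (hS : IsIndep Part K S) (hx : ¬ IsIndep Part K (insert x S)) :
    ∃ W, x ∈ W ∧ capacity Part K W ≤ #(W ∩ S) := by
  simp only [IsIndep, not_forall, not_le, exists_prop] at hx
  obtain ⟨W, hWx, hW⟩ := hx
  have hxW : x ∈ W := by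
    by_contra hxW
    exact (hS W ((subset_insert_iff_of_notMem hxW).1 hWx)).not_gt hW
  have herase : W.erase x ⊆ W ∩ S := fun y hy => by
    obtain ⟨hyx, hyW⟩ := mem_erase.1 hy
    exact mem_inter.2 ⟨hyW, (mem_insert.1 (hWx hyW)).resolve_left hyx⟩
  have := card_le_card herase
  rw [card_erase_of_mem hxW] at this
  exact ⟨W, hxW, by omega⟩

theorem sum_le_card_of_isMaxIndepIn {f : Ω → ℝ} (hf0 : ∀ x, 0 ≤ f x) (hf1 : ∀ x, f x ≤ 1)
    (hcap : ∀ W, ∑ x ∈ W, f x ≤ capacity Part K W) {A S : Finset Ω}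
    (hmax : IsMaxIndepIn (IsIndep Part K) A S) : ∑ x ∈ A, f x ≤ #S := by
  obtain ⟨hSA, hS, hmax⟩ := hmax
  have htight : ∀ x ∈ A \ S, ∃ W, x ∈ W ∧ capacity Part K W ≤ #(W ∩ S) := fun x hx =>
    hS.exists_mem_capacity_le_of_not_isIndep_insert (hmax x (mem_sdiff.1 hx).1 (mem_sdiff.1 hx).2)
  choose! W hxW hW using htight
  set U := (A \ S).sup W
  have hU : capacity Part K U ≤ #(U ∩ S) := hS.capacity_sup_le _ hW
  have hAU : A \ U ⊆ S \ U := fun x hx => by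
    obtain ⟨hxA, hxU⟩ := mem_sdiff.1 hx
    refine mem_sdiff.2 ⟨by_contra fun hxS => hxU ?_, hxU⟩
    exact le_sup (f := W) (mem_sdiff.2 ⟨hxA, hxS⟩) (hxW x (mem_sdiff.2 ⟨hxA, hxS⟩))
  calc ∑ x ∈ A, f x = ∑ x ∈ A ∩ U, f x + ∑ x ∈ A \ U, f x := (sum_inter_add_sum_sdiff A U f).symm
    _ ≤ ∑ x ∈ U, f x + #(A \ U) := by
        refine add_le_add (sum_le_sum_of_subset_of_nonneg inter_subset_right fun x _ _ => hf0 x) ?_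
        simpa using sum_le_card_nsmul (A \ U) f 1 fun x _ => hf1 x
    _ ≤ #(U ∩ S) + #(S \ U) := by
        refine add_le_add ((hcap U).trans (by exact_mod_cast hU)) ?_
        exact_mod_cast card_le_card hAU
    _ = #S := by rw [inter_comm]; exact_mod_cast card_inter_add_card_sdiff S U

theorem IsIndep.exists_validStrat_forall_searched {S : Finset Ω} (hS : IsIndep Part K S) :
    ∃ s, ValidStrat Part K s ∧ ∀ ω ∈ S, searched Part s ω := by
  have hall : ∀ t : Finset S, #t ≤ #(t.biUnion fun x => slotsAt Part K x) := fun t => by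
    have h := hS (t.map (Function.Embedding.subtype _)) fun x hx => by
      obtain ⟨y, -, rfl⟩ := mem_map.1 hx
      exact y.2
    rwa [card_map, capacity, map_eq_image, image_biUnion] at h
  obtain ⟨F, hFinj, hF⟩ := (all_card_le_biUnion_card_iff_exists_injective _).1 hall
  let s : N → Finset Ω → Finset Ω := fun i π =>
    (S.attach.filter fun x => (F x).1 = i ∧ (F x).2.1 = π).map (Function.Embedding.subtype _)
  refine ⟨s, fun i π _ => ⟨fun ω hω => ?_, ?_⟩, fun ω hω => ?_⟩
  · obtain ⟨x, hx, rfl⟩ := mem_map.1 hω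
    obtain ⟨-, -, hπ⟩ := mem_filter.1 hx
    exact hπ ▸ (mem_slotsAt.1 (hF x)).2.1
  · rw [card_map, ← card_range (K i)]
    refine card_le_card_of_injOn (fun x => (F x).2.2) (fun x hx => ?_) fun x hx y hy hxy => ?_
    · obtain ⟨-, hi, -⟩ := mem_filter.1 hx
      exact mem_range.2 (hi ▸ (mem_slotsAt.1 (hF x)).2.2)
    · obtain ⟨-, hxi, hxπ⟩ := mem_filter.1 hx
      obtain ⟨-, hyi, hyπ⟩ := mem_filter.1 hy
      exact hFinj (Sigma.ext (hxi.trans hyi.symm) (heq_of_eq (Prod.ext (hxπ.trans hyπ.symm) hxy)))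
  · obtain ⟨hπ, hωπ, -⟩ := mem_slotsAt.1 (hF ⟨ω, hω⟩)
    exact ⟨_, _, hπ, hωπ, mem_map.2 ⟨⟨ω, hω⟩, mem_filter.2 ⟨mem_attach _ _, rfl, rfl⟩, rfl⟩⟩

end Capacity

theorem socially_optimal_payoff_lower_bound_of_compatible_general
    {N Ω : Type} [Fintype N] [Fintype Ω] [DecidableEq Ω]
    (Part : N → Finset (Finset Ω)) (K : N → ℕ)
    (μ : Ω → ℝ) (hμ_nonneg : ∀ ω, 0 ≤ μ ω)
    (vs : Ω → ℝ) (hvs : ∀ ω, 0 ≤ vs ω)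
    (f : Ω → ℝ) (hf0 : ∀ ω, 0 ≤ f ω) (hf1 : ∀ ω, f ω ≤ 1)
    (hcompat : ∀ W : Finset Ω,
      ∑ ω ∈ W, f ω ≤
        ∑ i, (K i : ℝ) *
          (((Part i).filter fun π => (π ∩ W).Nonempty).card : ℝ)) :
    ∃ s : N → Finset Ω → Finset Ω, ValidStrat Part K s ∧
      ∑ ω, f ω * (μ ω * vs ω) ≤
        ∑ ω, μ ω * vs ω * (if searched Part s ω then 1 else 0) := by
  have hcap : ∀ W, ∑ ω ∈ W, f ω ≤ capacity Part K W := fun W => by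
    simpa [capacity_eq_sum] using hcompat W
  have hw : ∀ ω, 0 ≤ μ ω * vs ω := fun ω => mul_nonneg (hμ_nonneg ω) (hvs ω)
  obtain ⟨S, ⟨-, hS, -⟩, hgreedy⟩ := exists_isMaxIndepIn_sum_mul_sub_le (IsIndep Part K)
    isIndep_empty (fun _ _ hT hS => hS.subset hT) hf1
    (fun _ _ => sum_le_card_of_isMaxIndepIn hf0 hf1 hcap) (fun ω => μ ω * vs ω) univ
  obtain ⟨s, hs, hsearched⟩ := hS.exists_validStrat_forall_searched
  refine ⟨s, hs, ?_⟩
  calc ∑ ω, f ω * (μ ω * vs ω) ≤ ∑ ω ∈ S, μ ω * vs ω := by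
        simpa using hgreedy 0 fun ω _ => hw ω
    _ = ∑ ω ∈ S, μ ω * vs ω * (if searched Part s ω then 1 else 0) :=
        sum_congr rfl fun ω hω => by rw [if_pos (hsearched ω hω), mul_one]
    _ ≤ _ := sum_le_sum_of_subset_of_nonneg (subset_univ S) fun ω _ _ =>
        mul_nonneg (hw ω) (by split_ifs <;> norm_num)

/-- Lower bound for the socially optimal payoff: if `f` is a compatible mixed
outcome, then some pure strategy profile yields a social payoff of at least
`∑_ω f ω · μ ω · vs ω`; hence `U_opt` is at least this quantity. -/
theorem socially_optimal_payoff_lower_bound_of_compatible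
    {N Ω : Type} [Fintype N] [Fintype Ω] [DecidableEq Ω]
    (Part : N → Finset (Finset Ω)) (K : N → ℕ)
    (hPart : ∀ i, IsPartition (Part i))
    (μ : Ω → ℝ) (hμ_nonneg : ∀ ω, 0 ≤ μ ω) (hμ_sum : ∑ ω, μ ω = 1)
    (vs : Ω → ℝ) (hvs : ∀ ω, 0 ≤ vs ω)
    (f : Ω → ℝ) (hf0 : ∀ ω, 0 ≤ f ω) (hf1 : ∀ ω, f ω ≤ 1)
    (hcompat : ∀ W : Finset Ω,
      ∑ ω ∈ W, f ω ≤
        ∑ i, (K i : ℝ) *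
          (((Part i).filter fun π => (π ∩ W).Nonempty).card : ℝ)) :
    ∃ s : N → Finset Ω → Finset Ω, ValidStrat Part K s ∧
      ∑ ω, f ω * (μ ω * vs ω) ≤
        ∑ ω, μ ω * vs ω * (if searched Part s ω then 1 else 0) :=
  socially_optimal_payoff_lower_bound_of_compatible_general Part K μ hμ_nonneg vs hvs f hf0 hf1
    hcompat
end
end

section
/- In a search game where each player i has capacity K_i and M_i denotes the size of the largest cell of player i's partition, if ∑_{i∈N} K_i / M_i ≥ 1, then there exists an exhaustive pure strategy profile, i.e., a profile under which every location is searched by at least one player. -/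
/-!
Give every player `i` and every cell `π` of its partition `K i` search slots, and let a location
use the slots of the cells containing it. A set `s` of locations meets at least `#s / M i` cells
of player `i`, so by `∑ i, K i / M i ≥ 1` it can use at least `#s` slots. Hall's theorem then
assigns distinct slots to all locations, and each player searches, in each cell, the locations
assigned to its slots there.
-/

open scoped Classical
noncomputable section

variable {N Ω : Type}

open Finset

theorem card_le_card_filter_meets_mul_sup_card {α : Type*} [DecidableEq α]
    {P : Finset (Finset α)} {s : Finset α} (hcover : ∀ a ∈ s, ∃ π ∈ P, a ∈ π) :
    #s ≤ #{π ∈ P | (π ∩ s).Nonempty} * P.sup card := by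
  have hs : s ⊆ {π ∈ P | (π ∩ s).Nonempty}.biUnion (· ∩ s) := by
    intro a ha
    obtain ⟨π, hπ, haπ⟩ := hcover a ha
    have ha' : a ∈ π ∩ s := mem_inter.mpr ⟨haπ, ha⟩
    exact mem_biUnion.mpr ⟨π, mem_filter.mpr ⟨hπ, a, ha'⟩, ha'⟩
  calc #s ≤ #({π ∈ P | (π ∩ s).Nonempty}.biUnion (· ∩ s)) := card_le_card hs
    _ ≤ ∑ π ∈ {π ∈ P | (π ∩ s).Nonempty}, #(π ∩ s) := card_biUnion_le
    _ ≤ ∑ _π ∈ {π ∈ P | (π ∩ s).Nonempty}, P.sup card :=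
        sum_le_sum fun π hπ =>
          (card_le_card inter_subset_left).trans (le_sup (mem_filter.mp hπ).1)
    _ = #{π ∈ P | (π ∩ s).Nonempty} * P.sup card := by rw [sum_const, smul_eq_mul]

namespace SearchGame

variable [DecidableEq Ω] [Fintype N]

/-- The slot `⟨i, π, k⟩` is the `k`-th unit of capacity of player `i` in its cell `π`. -/
def slots (Part : N → Finset (Finset Ω)) (K : N → ℕ) (ω : Ω) : Finset (Σ _ : N, Finset Ω × ℕ) :=
  univ.sigma fun i => {π ∈ Part i | ω ∈ π} ×ˢ range (K i)

variable {Part : N → Finset (Finset Ω)} {K : N → ℕ}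

theorem mem_slots_iff {ω : Ω} {x : Σ _ : N, Finset Ω × ℕ} :
    x ∈ slots Part K ω ↔ x.2.1 ∈ Part x.1 ∧ ω ∈ x.2.1 ∧ x.2.2 < K x.1 := by
  simp [slots, and_assoc]

theorem card_le_card_biUnion_slots (hcover : ∀ i ω, ∃ π ∈ Part i, ω ∈ π)
    (hsum : (1 : ℝ) ≤ ∑ i, (K i : ℝ) / (((Part i).sup card : ℕ) : ℝ)) (s : Finset Ω) :
    #s ≤ #(s.biUnion (slots Part K)) := by
  set C : N → Finset (Finset Ω) := fun i => {π ∈ Part i | (π ∩ s).Nonempty}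
  have hsub : (univ.sigma fun i => C i ×ˢ range (K i)) ⊆ s.biUnion (slots Part K) := by
    rintro ⟨i, π, k⟩ hx
    simp only [C, mem_sigma, mem_product, mem_filter, mem_range] at hx
    obtain ⟨-, ⟨hπ, ω, hω⟩, hk⟩ := hx
    exact mem_biUnion.mpr ⟨ω, (mem_inter.mp hω).2, mem_slots_iff.mpr ⟨hπ, (mem_inter.mp hω).1, hk⟩⟩
  have hcount : (#s : ℝ) ≤ ∑ i, (#(C i) * K i : ℕ) := by
    calc (#s : ℝ) ≤ #s * ∑ i, (K i : ℝ) / (((Part i).sup card : ℕ) : ℝ) :=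
          le_mul_of_one_le_right (Nat.cast_nonneg _) hsum
      _ = ∑ i, #s / (((Part i).sup card : ℕ) : ℝ) * K i := by
          rw [mul_sum]; congr! 1 with i; ring
      _ ≤ ∑ i, (#(C i) * K i : ℕ) := by
          push_cast
          refine sum_le_sum fun i _ => mul_le_mul_of_nonneg_right ?_ (Nat.cast_nonneg _)
          -- no positivity of the cell size is needed here: `x / 0 = 0`
          exact div_le_of_le_mul₀ (Nat.cast_nonneg _) (Nat.cast_nonneg _) <| by
            exact_mod_cast card_le_card_filter_meets_mul_sup_card fun ω _ => hcover i ω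
  calc #s ≤ ∑ i, #(C i) * K i := by exact_mod_cast hcount
    _ = #(univ.sigma fun i => C i ×ˢ range (K i)) := by
        simp only [card_sigma, card_product, card_range]
    _ ≤ #(s.biUnion (slots Part K)) := card_le_card hsub

variable [Fintype Ω]

def profileOfAssignment (f : Ω → Σ _ : N, Finset Ω × ℕ) : N → Finset Ω → Finset Ω :=
  fun i π => {ω | (f ω).1 = i ∧ (f ω).2.1 = π}

variable {f : Ω → Σ _ : N, Finset Ω × ℕ}

theorem validStrat_profileOfAssignment (hf_inj : Function.Injective f)
    (hf_slot : ∀ ω, f ω ∈ slots Part K ω) :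
    ValidStrat Part K (profileOfAssignment f) := by
  intro i π _
  constructor
  · intro ω hω
    obtain ⟨rfl, rfl⟩ := (mem_filter.mp hω).2
    exact (mem_slots_iff.mp (hf_slot ω)).2.1
  · refine (card_le_card_of_injOn (fun ω => (f ω).2.2) ?_ ?_).trans (card_range (K i)).le
    · intro ω hω
      obtain ⟨rfl, -⟩ := (mem_filter.mp hω).2
      exact mem_range.mpr (mem_slots_iff.mp (hf_slot ω)).2.2
    · intro a ha b hb hab
      obtain ⟨ha₁, ha₂⟩ := (mem_filter.mp ha).2
      obtain ⟨hb₁, hb₂⟩ := (mem_filter.mp hb).2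
      exact hf_inj (Sigma.ext (ha₁.trans hb₁.symm)
        (heq_of_eq (Prod.ext (ha₂.trans hb₂.symm) hab)))

theorem searched_profileOfAssignment (hf_slot : ∀ ω, f ω ∈ slots Part K ω) (ω : Ω) :
    searched Part (profileOfAssignment f) ω := by
  obtain ⟨hcell, hω, -⟩ := mem_slots_iff.mp (hf_slot ω)
  exact ⟨(f ω).1, (f ω).2.1, hcell, hω, mem_filter.mpr ⟨mem_univ ω, rfl, rfl⟩⟩

end SearchGame

open SearchGame in
theorem exists_exhaustive_profile_of_capacity_over_max_cell_general
    {N Ω : Type} [Fintype N] [Fintype Ω] [DecidableEq Ω]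
    (Part : N → Finset (Finset Ω)) (K : N → ℕ)
    (hPart : ∀ i, IsPartition (Part i))
    (hsum : (1 : ℝ) ≤ ∑ i, (K i : ℝ) / (((Part i).sup Finset.card : ℕ) : ℝ)) :
    ∃ s : N → Finset Ω → Finset Ω, ValidStrat Part K s ∧
      ∀ ω : Ω, searched Part s ω := by
  obtain ⟨f, hf_inj, hf_slot⟩ := (all_card_le_biUnion_card_iff_exists_injective _).mp
    (card_le_card_biUnion_slots (fun i => (hPart i).2.2) hsum)
  exact ⟨profileOfAssignment f, validStrat_profileOfAssignment hf_inj hf_slot,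
    searched_profileOfAssignment hf_slot⟩

/-- If `∑_i K i / M i ≥ 1`, where `M i` is the size of the largest cell of
player `i`'s partition, then the search game admits an exhaustive pure strategy
profile: one under which every location is searched by at least one player. -/
theorem exists_exhaustive_profile_of_capacity_over_max_cell
    {N Ω : Type} [Fintype N] [Fintype Ω] [DecidableEq Ω] [Nonempty Ω]
    (Part : N → Finset (Finset Ω)) (K : N → ℕ)
    (hPart : ∀ i, IsPartition (Part i))
    (hK : ∀ i, 1 ≤ K i)
    (hsum : (1 : ℝ) ≤ ∑ i, (K i : ℝ) / (((Part i).sup Finset.card : ℕ) : ℝ)) :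
    ∃ s : N → Finset Ω → Finset Ω, ValidStrat Part K s ∧
      ∀ ω : Ω, searched Part s ω :=
  exists_exhaustive_profile_of_capacity_over_max_cell_general Part K hPart hsum
end
end

section
/- In a search game where m_i denotes the size of the smallest cell of player i's partition, if ∑_{i∈N} K_i / m_i ≤ 1, then there exists a pure strategy profile that always employs full capacity while avoiding search duplication: a profile s with |s_i(π_i)| = K_i for every cell π_i of every player i, and such that for every location ω, at most one player i has ω ∈ s_i(π_i(ω)). -/
open scoped Classical
noncomputable section

variable {N Ω : Type}

/-- If `∑_i K i / m i ≤ 1`, where `m i` is the size of the smallest cell of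
player `i`'s partition, then there exists a pure strategy profile that always
employs full capacity while avoiding search duplication. -/
theorem exists_redundancy_free_profile_of_capacity_over_min_cell
    {N Ω : Type} [Fintype N] [Fintype Ω] [DecidableEq Ω]
    (Part : N → Finset (Finset Ω)) (K : N → ℕ)
    (hPart : ∀ i, IsPartition (Part i))
    (hne : ∀ i, (Part i).Nonempty)
    (hsum : ∑ i, (K i : ℝ) / (((Part i).inf' (hne i) Finset.card : ℕ) : ℝ) ≤ 1) :
    ∃ s : N → Finset Ω → Finset Ω, ValidStrat Part K s ∧
      (∀ i, ∀ π ∈ Part i, (s i π).card = K i) ∧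
      (∀ ω : Ω, mcount Part s ω ≤ 1) := by
  classical
  set m : N → ℕ := fun i => (Part i).inf' (hne i) Finset.card with hm
  have hm1 : ∀ i, 1 ≤ m i := by
    intro i
    exact Finset.le_inf' (hne i) _ fun π hπ => Finset.card_pos.mpr ((hPart i).1 π hπ)
  have hmle : ∀ i, ∀ π ∈ Part i, m i ≤ π.card := fun i π hπ => Finset.inf'_le _ hπ
  -- index type for Hall's theorem
  let ι := Σ i : N, {π // π ∈ Part i} × Fin (K i)
  let t : ι → Finset Ω := fun x => (x.2.1 : Finset Ω)
  have hall : ∀ S : Finset ι, S.card ≤ (S.biUnion t).card := by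
    intro S
    let proj : ι → Σ i : N, {π // π ∈ Part i} := fun x => ⟨x.1, x.2.1⟩
    set T := S.image proj with hT
    set U := T.biUnion (fun j => (j.2 : Finset Ω)) with hU
    have hUeq : S.biUnion t = U := by
      rw [hU, hT, Finset.image_biUnion]
    rw [hUeq]
    -- step 1 : card S ≤ ∑ j in T, K j.1
    have h1 : S.card ≤ ∑ j ∈ T, K j.1 := by
      rw [Finset.card_eq_sum_card_image proj, hT]
      apply Finset.sum_le_sum
      intro j hj
      have hsub : S.filter (fun x => proj x = j) ⊆
          (Finset.univ : Finset (Fin (K j.1))).image (fun k => (⟨j.1, (j.2, k)⟩ : ι)) := by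
        intro x hx
        simp only [Finset.mem_filter] at hx
        obtain ⟨i, π, k⟩ := x
        obtain ⟨i0, π0⟩ := j
        obtain ⟨h1, h2⟩ := Sigma.mk.inj_iff.mp hx.2
        subst h1
        have hππ : π = π0 := eq_of_heq h2
        subst hππ
        simp only [Finset.mem_image, Finset.mem_univ, true_and]
        exact ⟨k, rfl⟩
      calc (S.filter (fun x => proj x = j)).card
          ≤ ((Finset.univ : Finset (Fin (K j.1))).image
              (fun k => (⟨j.1, (j.2, k)⟩ : ι))).card := Finset.card_le_card hsub
        _ ≤ (Finset.univ : Finset (Fin (K j.1))).card := Finset.card_image_le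
        _ = K j.1 := by simp
    -- step 2 : ∑ j in T, K j.1 ≤ U.card, via real arithmetic
    have h2 : (∑ j ∈ T, (K j.1 : ℝ)) ≤ (U.card : ℝ) := by
      have hcells : ∀ i : N, ∑ j ∈ T.filter (fun j => j.1 = i),
          (((j.2 : Finset Ω)).card : ℝ) ≤ (U.card : ℝ) := by
        intro i
        have hdisj : ∀ x ∈ T.filter (fun j => j.1 = i), ∀ y ∈ T.filter (fun j => j.1 = i),
            x ≠ y → Disjoint ((x.2 : Finset Ω)) ((y.2 : Finset Ω)) := by
          intro x hx y hy hxy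
          simp only [Finset.mem_filter] at hx hy
          have hx2 : (x.2 : Finset Ω) ∈ Part i := hx.2 ▸ x.2.2
          have hy2 : (y.2 : Finset Ω) ∈ Part i := hy.2 ▸ y.2.2
          have hvalne : (x.2 : Finset Ω) ≠ (y.2 : Finset Ω) := by
            intro hval
            apply hxy
            obtain ⟨x1, x2⟩ := x
            obtain ⟨y1, y2⟩ := y
            simp only at hx hy hval
            have h11 : x1 = y1 := hx.2.trans hy.2.symm
            subst h11
            congr 1
            exact Subtype.ext hval
          exact (hPart i).2.1 _ hx2 _ hy2 hvalne
        have hcardU : (T.filter (fun j => j.1 = i)).biUnion (fun j => (j.2 : Finset Ω)) ⊆ U := by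
          rw [hU]
          exact Finset.biUnion_subset_biUnion_of_subset_left _ (Finset.filter_subset _ _)
        have := Finset.card_biUnion hdisj
        have hnat : ∑ j ∈ T.filter (fun j => j.1 = i), ((j.2 : Finset Ω)).card ≤ U.card := by
          rw [← this]
          exact Finset.card_le_card hcardU
        calc ∑ j ∈ T.filter (fun j => j.1 = i), (((j.2 : Finset Ω)).card : ℝ)
            = ((∑ j ∈ T.filter (fun j => j.1 = i), ((j.2 : Finset Ω)).card : ℕ) : ℝ) := by
              push_cast; ring
          _ ≤ (U.card : ℝ) := by exact_mod_cast hnat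
      calc (∑ j ∈ T, (K j.1 : ℝ))
          ≤ ∑ j ∈ T, ((K j.1 : ℝ) / (m j.1 : ℝ)) * (((j.2 : Finset Ω)).card : ℝ) := by
            apply Finset.sum_le_sum
            intro j hj
            have hmem : (j.2 : Finset Ω) ∈ Part j.1 := j.2.2
            have hle : (m j.1 : ℝ) ≤ (((j.2 : Finset Ω)).card : ℝ) := by
              exact_mod_cast hmle j.1 _ hmem
            have hpos : (0 : ℝ) < (m j.1 : ℝ) := by
              exact_mod_cast Nat.lt_of_lt_of_le Nat.zero_lt_one (hm1 j.1)
            rw [div_mul_eq_mul_div, le_div_iff₀ hpos]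
            exact mul_le_mul_of_nonneg_left hle (Nat.cast_nonneg _)
        _ = ∑ i : N, ∑ j ∈ T.filter (fun j => j.1 = i),
              ((K j.1 : ℝ) / (m j.1 : ℝ)) * (((j.2 : Finset Ω)).card : ℝ) :=
            (Finset.sum_fiberwise T (fun j => j.1) _).symm
        _ ≤ ∑ i : N, ((K i : ℝ) / (m i : ℝ)) * (U.card : ℝ) := by
            apply Finset.sum_le_sum
            intro i _
            have : ∑ j ∈ T.filter (fun j => j.1 = i),
                ((K j.1 : ℝ) / (m j.1 : ℝ)) * (((j.2 : Finset Ω)).card : ℝ)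
                = ((K i : ℝ) / (m i : ℝ)) *
                  ∑ j ∈ T.filter (fun j => j.1 = i), (((j.2 : Finset Ω)).card : ℝ) := by
              rw [Finset.mul_sum]
              apply Finset.sum_congr rfl
              intro j hj
              simp only [Finset.mem_filter] at hj
              obtain ⟨j1, j2⟩ := j
              obtain ⟨-, rfl⟩ := hj
              rfl
            rw [this]
            apply mul_le_mul_of_nonneg_left (hcells i)
            positivity
        _ = (∑ i : N, (K i : ℝ) / (m i : ℝ)) * (U.card : ℝ) := (Finset.sum_mul _ _ _).symm
        _ ≤ 1 * (U.card : ℝ) := mul_le_mul_of_nonneg_right hsum (Nat.cast_nonneg _)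
        _ = (U.card : ℝ) := one_mul _
    have h2' : ∑ j ∈ T, K j.1 ≤ U.card := by
      have : ((∑ j ∈ T, K j.1 : ℕ) : ℝ) ≤ (U.card : ℝ) := by push_cast; exact h2
      exact_mod_cast this
    exact h1.trans h2'
  obtain ⟨f, hfinj, hft⟩ := (Finset.all_card_le_biUnion_card_iff_exists_injective t).mp hall
  set s : N → Finset Ω → Finset Ω := fun i π =>
    if h : π ∈ Part i then
      Finset.image (fun k : Fin (K i) => f ⟨i, (⟨π, h⟩, k)⟩) Finset.univ
    else ∅ with hs
  have hsub : ∀ i, ∀ π, ∀ h : π ∈ Part i, s i π ⊆ π := by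
    intro i π h ω hω
    rw [hs] at hω
    simp only [dif_pos h, Finset.mem_image, Finset.mem_univ, true_and] at hω
    obtain ⟨k, hk⟩ := hω
    have := hft ⟨i, (⟨π, h⟩, k)⟩
    rw [hk] at this
    exact this
  have hcard : ∀ i, ∀ π ∈ Part i, (s i π).card = K i := by
    intro i π h
    rw [hs]
    simp only [dif_pos h]
    rw [Finset.card_image_of_injective _ ?_, Finset.card_univ, Fintype.card_fin]
    intro k k' hkk
    have h0 := hfinj hkk
    have h2 : ((⟨π, h⟩, k) : {π // π ∈ Part i} × Fin (K i)) = (⟨π, h⟩, k') :=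
      eq_of_heq (Sigma.mk.inj_iff.mp h0).2
    exact congrArg Prod.snd h2
  refine ⟨s, ?_, hcard, ?_⟩
  · intro i π h
    exact ⟨hsub i π h, le_of_eq (hcard i π h)⟩
  · intro ω
    rw [mcount]
    apply Finset.card_le_one.mpr
    intro i hi i' hi'
    simp only [Finset.mem_filter, Finset.mem_univ, true_and] at hi hi'
    obtain ⟨π, hπ, hωπ, hωs⟩ := hi
    obtain ⟨π', hπ', hωπ', hωs'⟩ := hi'
    rw [hs] at hωs hωs'
    simp only [dif_pos hπ, dif_pos hπ', Finset.mem_image, Finset.mem_univ, true_and]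
      at hωs hωs'
    obtain ⟨k, hk⟩ := hωs
    obtain ⟨k', hk'⟩ := hωs'
    have : (⟨i, (⟨π, hπ⟩, k)⟩ : ι) = ⟨i', (⟨π', hπ'⟩, k')⟩ := hfinj (hk.trans hk'.symm)
    exact congrArg Sigma.fst this
end
end

section
/- Consider a search game with Ω ⊆ {0,1}⁴, |Ω| = 10, four players each of capacity 1, where player i's partition is determined by the i-th coordinate. Then the constant outcome f(ω) = 0.8 is compatible: for every W ⊆ Ω, if k is the number of cells (over all players) that do not intersect W, then |W| ≤ 2^{4-k} when k ≥ 1, and 0.8·|W| ≤ 8 − k. -/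
open scoped Classical

noncomputable def Kk (W : Finset (Fin 4 → Bool)) : ℕ :=
  ∑ i : Fin 4, ((Finset.univ : Finset Bool).filter fun b => ∀ ω ∈ W, ω i ≠ b).card

lemma key (W : Finset (Fin 4 → Bool)) (h10 : W.card ≤ 10) :
    (1 ≤ Kk W → W.card ≤ 2 ^ (4 - Kk W)) ∧ 4 * W.card + 5 * Kk W ≤ 40 := by
  rcases W.eq_empty_or_nonempty with rfl | ⟨ω₀, hω₀⟩
  · constructor
    · intro _; simp
    · simp [Kk]
  · have hsub : ∀ i : Fin 4,
        ((Finset.univ : Finset Bool).filter fun b => ∀ ω ∈ W, ω i ≠ b) ⊆ {!(ω₀ i)} := by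
      intro i b hb
      simp only [Finset.mem_filter] at hb
      have h := hb.2 ω₀ hω₀
      simp only [Finset.mem_singleton]
      cases hb' : b <;> cases h' : ω₀ i <;> simp_all
    set S : Finset (Fin 4) :=
      Finset.univ.filter fun i : Fin 4 =>
        ((Finset.univ : Finset Bool).filter fun b => ∀ ω ∈ W, ω i ≠ b).Nonempty with hS
    have hfix : ∀ i ∈ S, ∀ ω ∈ W, ω i = ω₀ i := by
      intro i hi ω hω
      simp only [hS, Finset.mem_filter] at hi
      obtain ⟨b, hb⟩ := hi.2
      have hb1 := hb
      have hbmem := hsub i hb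
      simp only [Finset.mem_singleton] at hbmem
      simp only [Finset.mem_filter] at hb1
      have := hb1.2 ω hω
      subst hbmem
      cases h' : ω₀ i <;> cases h'' : ω i <;> simp_all
    have hK : Kk W = S.card := by
      rw [Kk, hS, Finset.card_filter]
      refine Finset.sum_congr rfl fun i _ => ?_
      rcases ((Finset.univ : Finset Bool).filter fun b => ∀ ω ∈ W, ω i ≠ b).eq_empty_or_nonempty with he | hne
      · rw [he]; simp
      · have h1 : ((Finset.univ : Finset Bool).filter fun b => ∀ ω ∈ W, ω i ≠ b).card ≤ 1 :=
          le_trans (Finset.card_le_card (hsub i)) (by simp)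
        have h2 := Finset.card_pos.2 hne
        rw [if_pos hne]
        exact le_antisymm h1 h2
    have hWcard : W.card ≤ 2 ^ (4 - S.card) := by
      have hinj : Set.InjOn (fun (ω : Fin 4 → Bool) (i : ↥(Sᶜ)) => ω i) W := by
        intro ω hω ω' hω' h
        funext i
        by_cases hi : i ∈ S
        · rw [hfix i hi ω hω, hfix i hi ω' hω']
        · exact congrFun h ⟨i, by simpa using hi⟩
      have := Finset.card_le_card_of_injOn (fun (ω : Fin 4 → Bool) (i : ↥(Sᶜ)) => ω i)
        (fun _ _ => Finset.mem_univ _) hinj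
      calc W.card ≤ (Finset.univ : Finset (↥(Sᶜ) → Bool)).card := this
        _ = 2 ^ (4 - S.card) := by
            rw [Finset.card_univ, Fintype.card_fun, Fintype.card_coe, Finset.card_compl]
            simp
    have hS4 : S.card ≤ 4 := le_trans (Finset.card_le_univ S) (by simp)
    rw [hK]
    refine ⟨fun _ => hWcard, ?_⟩
    set m := S.card with hm
    interval_cases m <;> norm_num at hWcard ⊢ <;> omega

/-- Search game with `Ω ⊆ {0,1}⁴`, `|Ω| = 10`, four players each of capacity
one, player `i`'s partition determined by the `i`-th coordinate (both cells of
each player assumed nonempty, so there are 8 cells in total). Then the constant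
outcome `f ≡ 0.8` is compatible: for every `W ⊆ Ω`, writing `k` for the number
of cells (over all players) not intersecting `W`, we have `|W| ≤ 2^(4-k)` when
`k ≥ 1`, and `0.8·|W| ≤ 8 − k` (the latter being exactly the compatibility
inequality, since `8 − k` cells intersect `W`). -/
theorem ten_vectors_constant_outcome_compatible
    (Ω : Finset (Fin 4 → Bool)) (hcard : Ω.card = 10)
    (hcells : ∀ (i : Fin 4) (b : Bool), ∃ ω ∈ Ω, ω i = b) :
    ∀ W ⊆ Ω,
      let k : ℕ := ∑ i : Fin 4,
        ((Finset.univ : Finset Bool).filter fun b => ∀ ω ∈ W, ω i ≠ b).card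
      (1 ≤ k → W.card ≤ 2 ^ (4 - k)) ∧
      (0.8 : ℝ) * (W.card : ℝ) ≤ 8 - (k : ℝ) := by
  intro W hW
  have h10 : W.card ≤ 10 := hcard ▸ Finset.card_le_card hW
  obtain ⟨h1, h2⟩ := key W h10
  refine ⟨h1, ?_⟩
  have h2' : (4 * W.card + 5 * Kk W : ℝ) ≤ 40 := by exact_mod_cast h2
  show (0.8 : ℝ) * (W.card : ℝ) ≤ 8 - (Kk W : ℝ)
  norm_num
  linarith [h2']
end

section
/- Every search game admits a pure Bayesian Nash equilibrium. -/
open scoped Classical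
noncomputable section

variable {N Ω : Type}

noncomputable section

/-- Expected payoff of player `i` under profile `s`: for each location `ω`
(weighted by the prior `μ`), the reward `v i m ω` if `i` searches `ω` when `m`
players search there, minus the search cost `c i k` for searching `k` locations
in the realized cell. -/
def payoff {N Ω : Type} [Fintype N] [Fintype Ω] [DecidableEq Ω]
    (Part : N → Finset (Finset Ω)) (μ : Ω → ℝ) (c : N → ℕ → ℝ)
    (v : N → ℕ → Ω → ℝ) (i : N) (s : N → Finset Ω → Finset Ω) : ℝ :=
  ∑ ω : Ω, μ ω *
    ((if searchesAt Part s i ω then v i (mcount Part s ω) ω else 0)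
      - ∑ π ∈ (Part i).filter (fun π => ω ∈ π), c i ((s i π).card))

/-- A (pure Bayesian) Nash equilibrium: a valid profile from which no player
has a profitable unilateral deviation to another valid strategy. -/
def IsNash {N Ω : Type} [Fintype N] [DecidableEq N] [Fintype Ω] [DecidableEq Ω]
    (Part : N → Finset (Finset Ω)) (K : N → ℕ) (μ : Ω → ℝ) (c : N → ℕ → ℝ)
    (v : N → ℕ → Ω → ℝ) (s : N → Finset Ω → Finset Ω) : Prop :=
  ValidStrat Part K s ∧
  ∀ (i : N) (t : Finset Ω → Finset Ω), ValidFor Part K i t →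
    payoff Part μ c v i (Function.update s i t) ≤ payoff Part μ c v i s

end



set_option linter.unusedSectionVars false
set_option linter.unusedVariables false
set_option maxHeartbeats 1000000

namespace SGaux

variable {Ω : Type} [Fintype Ω] [DecidableEq Ω]

/-- value of a chosen set given per-location values `x` and cost `C`. -/
def fval (x : Ω → ℝ) (C : ℕ → ℝ) (T : Finset Ω) : ℝ := (∑ ω ∈ T, x ω) - C T.card

/-- `S` is an optimal choice within cell `π`, capacity `K`. -/
def OptIn (π : Finset Ω) (K : ℕ) (x : Ω → ℝ) (C : ℕ → ℝ) (S : Finset Ω) : Prop :=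
  S ⊆ π ∧ S.card ≤ K ∧ ∀ T ⊆ π, T.card ≤ K → fval x C T ≤ fval x C S

def ConvexC (C : ℕ → ℝ) : Prop := ∀ k, C (k + 1) - C k ≤ C (k + 2) - C (k + 1)

lemma ConvexC.diff_mono {C : ℕ → ℝ} (h : ConvexC C) {a b : ℕ} (hab : a ≤ b) :
    C (a + 1) - C a ≤ C (b + 1) - C b := by
  induction b with
  | zero => simp_all
  | succ n ih =>
    rcases Nat.lt_or_ge a (n+1) with h1 | h1
    · exact le_trans (ih (Nat.lt_succ_iff.mp h1)) (h n)
    · have : a = n + 1 := le_antisymm hab h1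
      subst this; rfl

lemma fval_insert {x : Ω → ℝ} {C : ℕ → ℝ} {S : Finset Ω} {γ : Ω} (h : γ ∉ S) :
    fval x C (insert γ S) = fval x C S + x γ - (C (S.card + 1) - C S.card) := by
  unfold fval
  rw [Finset.sum_insert h, Finset.card_insert_of_notMem h]
  ring

lemma fval_erase {x : Ω → ℝ} {C : ℕ → ℝ} {S : Finset Ω} {β : Ω} (h : β ∈ S) :
    fval x C S = fval x C (S.erase β) + x β - (C ((S.erase β).card + 1) - C (S.erase β).card) := by
  have h1 : insert β (S.erase β) = S := Finset.insert_erase h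
  have := fval_insert (x := x) (C := C) (S := S.erase β) (γ := β) (Finset.notMem_erase _ _)
  rw [h1] at this
  linarith

lemma opt_shift {π : Finset Ω} {K : ℕ} {x : Ω → ℝ} {C : ℕ → ℝ} {S : Finset Ω}
    (h : OptIn π K x C S) (x' : Ω → ℝ)
    (h1 : ∀ ω ∈ S, x ω ≤ x' ω) (h2 : ∀ ω ∈ π, ω ∉ S → x' ω ≤ x ω) :
    OptIn π K x' C S := by
  obtain ⟨hSπ, hSK, hopt⟩ := h
  refine ⟨hSπ, hSK, fun T hT hTK => ?_⟩
  have key : ∑ ω ∈ T, (x' ω - x ω) ≤ ∑ ω ∈ S, (x' ω - x ω) := by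
    have e1 : ∑ ω ∈ T ∩ S, (x' ω - x ω) + ∑ ω ∈ T \ S, (x' ω - x ω) = ∑ ω ∈ T, (x' ω - x ω) :=
      Finset.sum_inter_add_sum_sdiff T S _
    have e2 : ∑ ω ∈ T \ S, (x' ω - x ω) ≤ 0 := by
      apply Finset.sum_nonpos
      intro ω hω
      have := h2 ω (hT (Finset.mem_sdiff.mp hω).1) (Finset.mem_sdiff.mp hω).2
      linarith
    have e3 : ∑ ω ∈ T ∩ S, (x' ω - x ω) ≤ ∑ ω ∈ S, (x' ω - x ω) := by
      apply Finset.sum_le_sum_of_subset_of_nonneg Finset.inter_subset_right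
      intro ω hω _
      have := h1 ω hω
      linarith
    linarith
  have d1 : fval x' C T = fval x C T + ∑ ω ∈ T, (x' ω - x ω) := by
    unfold fval; rw [Finset.sum_sub_distrib]; ring
  have d2 : fval x' C S = fval x C S + ∑ ω ∈ S, (x' ω - x ω) := by
    unfold fval; rw [Finset.sum_sub_distrib]; ring
  have := hopt T hT hTK
  linarith


lemma cap_extend {π : Finset Ω} {k : ℕ} {x : Ω → ℝ} {C : ℕ → ℝ} {S : Finset Ω}
    (hconv : ConvexC C) (h : OptIn π k x C S) :
    ∃ S', OptIn π (k + 1) x C S' ∧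
      (S' = S ∨ ∃ γ ∈ π, γ ∉ S ∧ S' = insert γ S) := by
  obtain ⟨hSπ, hSK, hopt⟩ := h
  rcases Finset.eq_empty_or_nonempty (π \ S) with hempty | ⟨γ, hγ⟩
  · refine ⟨S, ⟨hSπ, le_trans hSK (Nat.le_succ k), fun T hT hTK => ?_⟩, Or.inl rfl⟩
    have hπS : π ⊆ S := by
      intro ω hω
      by_contra hc
      exact Finset.notMem_empty ω (hempty ▸ Finset.mem_sdiff.mpr ⟨hω, hc⟩)
    have : T.card ≤ k := le_trans (Finset.card_le_card (hT.trans hπS)) hSK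
    exact hopt T hT this
  · obtain ⟨hγπ, hγS⟩ := Finset.mem_sdiff.mp hγ
    -- γmax : argmax over π \ S
    obtain ⟨γ', hγ'mem, hγ'max⟩ := Finset.exists_max_image (π \ S) x ⟨γ, hγ⟩
    obtain ⟨hγ'π, hγ'S⟩ := Finset.mem_sdiff.mp hγ'mem
    set Ins := insert γ' S with hIns
    have hInsπ : Ins ⊆ π := Finset.insert_subset hγ'π hSπ
    have hInscard : Ins.card = S.card + 1 := Finset.card_insert_of_notMem hγ'S
    have bound : ∀ T ⊆ π, T.card ≤ k + 1 → fval x C T ≤ max (fval x C S) (fval x C Ins) := by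
      intro T hT hTK
      rcases Nat.lt_or_ge T.card (k + 1) with hlt | hge
      · exact le_trans (hopt T hT (Nat.lt_succ_iff.mp hlt)) (le_max_left _ _)
      · have hTcard : T.card = k + 1 := le_antisymm hTK hge
        have hTS : ¬ T ⊆ S := by
          intro hc
          have := Finset.card_le_card hc
          omega
        obtain ⟨t, htT, htS⟩ := Finset.not_subset.mp hTS
        have htπS : t ∈ π \ S := Finset.mem_sdiff.mpr ⟨hT htT, htS⟩
        have hxt : x t ≤ x γ' := hγ'max t htπS
        have hec : (T.erase t).card = k := by
          rw [Finset.card_erase_of_mem htT, hTcard]; omega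
        have h1 : fval x C (T.erase t) ≤ fval x C S :=
          hopt _ ((Finset.erase_subset t T).trans hT) (le_of_eq hec)
        have h2 : fval x C T = fval x C (T.erase t) + x t - (C (k + 1) - C k) := by
          have := fval_erase (x := x) (C := C) (S := T) (β := t) htT
          rw [hec] at this; exact this
        have h3 : C (S.card + 1) - C S.card ≤ C (k + 1) - C k := hconv.diff_mono hSK
        have h4 : fval x C Ins = fval x C S + x γ' - (C (S.card + 1) - C S.card) :=
          fval_insert hγ'S
        have : fval x C T ≤ fval x C Ins := by linarith
        exact le_trans this (le_max_right _ _)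
    rcases le_total (fval x C Ins) (fval x C S) with hle | hle
    · refine ⟨S, ⟨hSπ, le_trans hSK (Nat.le_succ k), fun T hT hTK => ?_⟩, Or.inl rfl⟩
      have := bound T hT hTK
      rw [max_eq_left hle] at this; exact this
    · refine ⟨Ins, ⟨hInsπ, by omega, fun T hT hTK => ?_⟩, Or.inr ⟨γ', hγ'π, hγ'S, rfl⟩⟩
      have := bound T hT hTK
      rw [max_eq_right hle] at this; exact this

lemma dec_step {π : Finset Ω} {K : ℕ} {x x' : Ω → ℝ} {C : ℕ → ℝ} {S : Finset Ω} {β : Ω}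
    (hconv : ConvexC C) (h : OptIn π K x C S) (hβ : β ∈ S)
    (hx' : ∀ ω, ω ≠ β → x' ω = x ω) (hb : x' β ≤ x β) :
    ∃ S', OptIn π K x' C S' ∧
      (S' = S ∨ (fval x' C S < fval x' C S' ∧
        (S' = S.erase β ∨ ∃ γ ∈ π, γ ∉ S ∧ S' = insert γ (S.erase β) ∧ x' β < x' γ))) := by
  obtain ⟨hSπ, hSK, hopt⟩ := h
  set R := S.erase β with hR
  have hRcard : R.card + 1 = S.card := Finset.card_erase_add_one hβ
  have hRS : R ⊆ S := Finset.erase_subset _ _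
  have hRπ : R ⊆ π := hRS.trans hSπ
  have hβR : β ∉ R := Finset.notMem_erase _ _
  have hβπ : β ∈ π := hSπ hβ
  -- sub-lemma 1
  have sub1 : ∀ T ⊆ π, β ∉ T → T.card ≤ R.card → fval x C T ≤ fval x C R := by
    intro T hT hβT hTc
    have hcard : (insert β T).card = T.card + 1 := Finset.card_insert_of_notMem hβT
    have hsub : insert β T ⊆ π := Finset.insert_subset hβπ hT
    have h1 : fval x C (insert β T) ≤ fval x C S := by
      apply hopt _ hsub; omega
    have h2 : fval x C (insert β T) = fval x C T + x β - (C (T.card + 1) - C T.card) :=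
      fval_insert hβT
    have h3 : fval x C S = fval x C R + x β - (C (R.card + 1) - C R.card) := fval_erase hβ
    have h4 : C (T.card + 1) - C T.card ≤ C (R.card + 1) - C R.card := hconv.diff_mono hTc
    linarith
  by_cases hOS : OptIn π K x' C S
  · exact ⟨S, hOS, Or.inl rfl⟩
  -- general facts about x' vs x
  have cβ : ∀ T, T ⊆ π → T.card ≤ K → β ∈ T → fval x' C T ≤ fval x' C S := by
    intro T hT hTK hβT
    have e : ∀ (U : Finset Ω), β ∈ U → fval x' C U = fval x C U + (x' β - x β) := by
      intro U hβU
      have : ∑ ω ∈ U, (x' ω - x ω) = x' β - x β := by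
        apply Finset.sum_eq_single_of_mem β hβU
        intro b _ hbne
        rw [hx' b hbne]; ring
      rw [Finset.sum_sub_distrib] at this
      unfold fval
      linarith
    rw [e T hβT, e S hβ]
    have := hopt T hT hTK
    linarith
  have cfree : ∀ (T : Finset Ω), β ∉ T → fval x' C T = fval x C T := by
    intro T hβT
    unfold fval
    congr 1
    exact Finset.sum_congr rfl fun ω hω => hx' ω (fun hc => hβT (hc ▸ hω))
  -- discontent witness
  have hdis : ∃ T₀, T₀ ⊆ π ∧ T₀.card ≤ K ∧ fval x' C S < fval x' C T₀ := by
    by_contra hc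
    push_neg at hc
    exact hOS ⟨hSπ, hSK, fun T hT hTK => hc T hT hTK⟩
  obtain ⟨T₀, hT₀π, hT₀K, hT₀⟩ := hdis
  have hβT₀ : β ∉ T₀ := fun hc => absurd (cβ T₀ hT₀π hT₀K hc) (not_le.mpr hT₀)
  rcases Finset.eq_empty_or_nonempty (π \ S) with hempty | ⟨γ0, hγ0⟩
  · -- π ⊆ S : only candidate is R
    have hπS : π ⊆ S := fun ω hω => by
      by_contra hc
      exact Finset.notMem_empty ω (hempty ▸ Finset.mem_sdiff.mpr ⟨hω, hc⟩)
    have bnd : ∀ T ⊆ π, β ∉ T → fval x C T ≤ fval x C R := by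
      intro T hT hβT
      have hTR : T ⊆ R := fun ω hω =>
        Finset.mem_erase.mpr ⟨fun hc => hβT (hc ▸ hω), hπS (hT hω)⟩
      exact sub1 T hT hβT (Finset.card_le_card hTR)
    have hRx' : fval x' C R = fval x C R := cfree R hβR
    have hstrict : fval x' C S < fval x' C R := by
      have := bnd T₀ hT₀π hβT₀
      rw [cfree T₀ hβT₀] at hT₀
      linarith
    refine ⟨R, ⟨hRπ, by omega, fun T hT hTK => ?_⟩, Or.inr ⟨hstrict, Or.inl rfl⟩⟩
    by_cases hβT : β ∈ T
    · exact le_trans (cβ T hT hTK hβT) (le_of_lt hstrict)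
    · rw [cfree T hβT, hRx']
      exact bnd T hT hβT
  · -- argmax γ over π \ S
    obtain ⟨γ, hγmem, hγmax⟩ := Finset.exists_max_image (π \ S) x ⟨γ0, hγ0⟩
    obtain ⟨hγπ, hγS⟩ := Finset.mem_sdiff.mp hγmem
    have hγR : γ ∉ R := fun hc => hγS (hRS hc)
    have hγβ : γ ≠ β := fun hc => hγS (hc ▸ hβ)
    set Q := insert γ R with hQ
    have hβQ : β ∉ Q := by
      simp only [hQ, Finset.mem_insert]
      push_neg
      exact ⟨fun hc => hγβ hc.symm, hβR⟩
    have hQπ : Q ⊆ π := Finset.insert_subset hγπ hRπ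
    have hQcard : Q.card = R.card + 1 := Finset.card_insert_of_notMem hγR
    -- main bound by strong induction on card
    have claim2 : ∀ n, ∀ T : Finset Ω, T.card ≤ n → T ⊆ π → β ∉ T → T.card ≤ K →
        fval x C T ≤ max (fval x C R) (fval x C Q) := by
      intro n
      induction n with
      | zero =>
        intro T hn hT hβT hTK
        exact le_trans (sub1 T hT hβT (by omega)) (le_max_left _ _)
      | succ n ih =>
        intro T hn hT hβT hTK
        rcases le_or_gt T.card R.card with hle | hgt
        · exact le_trans (sub1 T hT hβT hle) (le_max_left _ _)
        · -- T.card ≥ R.card + 1 = S.card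
          have hTS : ¬ T ⊆ S := by
            intro hc
            have hTR : T ⊆ R := fun ω hω =>
              Finset.mem_erase.mpr ⟨fun he => hβT (he ▸ hω), hc hω⟩
            have := Finset.card_le_card hTR
            omega
          obtain ⟨t, htT, htS⟩ := Finset.not_subset.mp hTS
          have hxt : x t ≤ x γ := hγmax t (Finset.mem_sdiff.mpr ⟨hT htT, htS⟩)
          have hec : (T.erase t).card + 1 = T.card := Finset.card_erase_add_one htT
          have hfe : fval x C T = fval x C (T.erase t) + x t
              - (C ((T.erase t).card + 1) - C (T.erase t).card) := fval_erase htT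
          rcases le_or_gt T.card (R.card + 1) with heq | hbig
          · -- T.card = R.card + 1
            have hTcard : T.card = R.card + 1 := by omega
            have h1 : fval x C (T.erase t) ≤ fval x C R :=
              sub1 _ ((Finset.erase_subset _ _).trans hT)
                (fun hc => hβT (Finset.mem_of_mem_erase hc)) (by omega)
            have h2 : fval x C Q = fval x C R + x γ - (C (R.card + 1) - C R.card) :=
              fval_insert hγR
            have hecR : (T.erase t).card = R.card := by omega
            rw [hecR] at hfe
            have : fval x C T ≤ fval x C Q := by linarith
            exact le_trans this (le_max_right _ _)
          · -- T.card ≥ S.card + 1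
            have hSc1 : S.card + 1 ≤ T.card := by omega
            have hInsS : fval x C (insert γ S) ≤ fval x C S := by
              apply hopt _ (Finset.insert_subset hγπ hSπ)
              rw [Finset.card_insert_of_notMem hγS]; omega
            have hInsSe : fval x C (insert γ S) = fval x C S + x γ
                - (C (S.card + 1) - C S.card) := fval_insert hγS
            have hxγ : x γ ≤ C (S.card + 1) - C S.card := by linarith
            have hdm : C (S.card + 1) - C S.card
                ≤ C ((T.erase t).card + 1) - C (T.erase t).card := by
              apply hconv.diff_mono; omega
            have hTle : fval x C T ≤ fval x C (T.erase t) := by linarith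
            have := ih (T.erase t) (by omega) ((Finset.erase_subset _ _).trans hT)
              (fun hc => hβT (Finset.mem_of_mem_erase hc)) (by omega)
            linarith
    have bnd := claim2 T₀.card T₀ le_rfl hT₀π hβT₀ hT₀K
    rw [cfree T₀ hβT₀] at hT₀
    have hRx' : fval x' C R = fval x C R := cfree R hβR
    have hQx' : fval x' C Q = fval x C Q := cfree Q hβQ
    rcases le_total (fval x C Q) (fval x C R) with hcase | hcase
    · rw [max_eq_left hcase] at bnd
      have hstrict : fval x' C S < fval x' C R := by rw [hRx']; linarith
      refine ⟨R, ⟨hRπ, by omega, fun T hT hTK => ?_⟩, Or.inr ⟨hstrict, Or.inl rfl⟩⟩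
      by_cases hβT : β ∈ T
      · exact le_trans (cβ T hT hTK hβT) (le_of_lt hstrict)
      · rw [cfree T hβT, hRx']
        have := claim2 T.card T le_rfl hT hβT hTK
        rw [max_eq_left hcase] at this; exact this
    · rw [max_eq_right hcase] at bnd
      have hstrict : fval x' C S < fval x' C Q := by rw [hQx']; linarith
      have hxβγ : x' β < x' γ := by
        have e1 : fval x' C S = fval x' C R + x' β - (C (R.card + 1) - C R.card) :=
          fval_erase hβ
        have e2 : fval x' C Q = fval x' C R + x' γ - (C (R.card + 1) - C R.card) :=
          fval_insert hγR
        linarith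
      refine ⟨Q, ⟨hQπ, by omega, fun T hT hTK => ?_⟩,
        Or.inr ⟨hstrict, Or.inr ⟨γ, hγπ, hγS, rfl, hxβγ⟩⟩⟩
      by_cases hβT : β ∈ T
      · exact le_trans (cβ T hT hTK hβT) (le_of_lt hstrict)
      · rw [cfree T hβT, hQx']
        have := claim2 T.card T le_rfl hT hβT hTK
        rw [max_eq_right hcase] at this; exact this

/-- split a cardinality filter at one element -/
lemma card_filter_split {α : Type} [Fintype α] [DecidableEq α] (p : α → Prop) (a : α) :
    (Finset.univ.filter fun b => p b).card
      = (if p a then 1 else 0) + (Finset.univ.filter fun b => b ≠ a ∧ p b).card := by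
  rw [Finset.card_filter, Finset.card_filter]
  rw [← Finset.add_sum_erase _ _ (Finset.mem_univ a),
      ← Finset.add_sum_erase _ (fun b => if b ≠ a ∧ p b then 1 else 0) (Finset.mem_univ a)]
  have h1 : (if a ≠ a ∧ p a then (1:ℕ) else 0) = 0 := by simp
  have h2 : ∀ b ∈ Finset.univ.erase a,
      (if p b then (1:ℕ) else 0) = (if b ≠ a ∧ p b then 1 else 0) := by
    intro b hb
    have hba : b ≠ a := (Finset.mem_erase.mp hb).1
    simp [hba]
  rw [Finset.sum_congr rfl h2, h1]
  omega

section Abstract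
variable {A : Type} [Fintype A] [DecidableEq A]

def nAll (T : A → Finset Ω) (ω : Ω) : ℕ := (Finset.univ.filter fun b => ω ∈ T b).card

def nOther (T : A → Finset Ω) (a : A) (ω : Ω) : ℕ :=
  (Finset.univ.filter fun b => b ≠ a ∧ ω ∈ T b).card

lemma nAll_split (T : A → Finset Ω) (a : A) (ω : Ω) :
    nAll T ω = (if ω ∈ T a then 1 else 0) + nOther T a ω := by
  unfold nAll nOther
  rw [Finset.card_filter, Finset.card_filter]
  rw [← Finset.add_sum_erase _ _ (Finset.mem_univ a),
      ← Finset.add_sum_erase _ (fun b => if b ≠ a ∧ ω ∈ T b then 1 else 0) (Finset.mem_univ a)]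
  have h1 : (if a ≠ a ∧ ω ∈ T a then (1:ℕ) else 0) = 0 := by simp
  have h2 : ∀ b ∈ Finset.univ.erase a,
      (if ω ∈ T b then (1:ℕ) else 0) = (if b ≠ a ∧ ω ∈ T b then 1 else 0) := by
    intro b hb
    have hba : b ≠ a := (Finset.mem_erase.mp hb).1
    simp [hba]
  rw [Finset.sum_congr rfl h2, h1]
  omega

lemma nOther_update (T : A → Finset Ω) (a : A) (S : Finset Ω) (ω : Ω) :
    nOther (Function.update T a S) a ω = nOther T a ω := by
  unfold nOther
  congr 1
  apply Finset.filter_congr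
  intro b _
  constructor
  · rintro ⟨hba, hm⟩; rw [Function.update_of_ne hba] at hm; exact ⟨hba, hm⟩
  · rintro ⟨hba, hm⟩; rw [Function.update_of_ne hba]; exact ⟨hba, hm⟩

variable (pa : A → Finset Ω) (Ka : A → ℕ) (Va : A → Ω → ℕ → ℝ) (Ca : A → ℕ → ℝ)

def xTrue (T : A → Finset Ω) (a : A) (ω : Ω) : ℝ := Va a ω (nOther T a ω + 1)

def AbNE (T : A → Finset Ω) : Prop :=
  ∀ a, OptIn (pa a) (Ka a) (xTrue Va T a) (Ca a) (T a)

def xB (n₀ : Ω → ℕ) (T : A → Finset Ω) (a : A) (ω : Ω) : ℝ :=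
  Va a ω (n₀ ω + (if ω ∈ T a then 0 else 1))

def Phi (n₀ : Ω → ℕ) (T : A → Finset Ω) : ℝ := ∑ a, ∑ ω ∈ T a, Va a ω (n₀ ω + 1)

def meas (n₀ : Ω → ℕ) (T : A → Finset Ω) : ℕ :=
  (Finset.univ.filter fun U : A → Finset Ω => Phi Va n₀ T < Phi Va n₀ U).card

lemma meas_lt {n₀ : Ω → ℕ} {T T' : A → Finset Ω} (h : Phi Va n₀ T < Phi Va n₀ T') :
    meas Va n₀ T' < meas Va n₀ T := by
  apply Finset.card_lt_card
  rw [Finset.ssubset_iff_of_subset]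
  · exact ⟨T', Finset.mem_filter.mpr ⟨Finset.mem_univ _, h⟩,
      fun hc => lt_irrefl _ (Finset.mem_filter.mp hc).2⟩
  · intro U hU
    rcases Finset.mem_filter.mp hU with ⟨_, hU2⟩
    exact Finset.mem_filter.mpr ⟨Finset.mem_univ _, lt_trans h hU2⟩


lemma hmono_of (hVdec : ∀ a ω m, Va a ω (m + 1) ≤ Va a ω m) :
    ∀ (a : A) (ω : Ω) {m m' : ℕ}, m ≤ m' → Va a ω m' ≤ Va a ω m := by
  intro a ω m m' h
  induction m' with
  | zero => have : m = 0 := Nat.le_zero.mp h; rw [this]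
  | succ k ih =>
    rcases Nat.lt_or_ge m (k + 1) with h1 | h1
    · exact le_trans (hVdec a ω k) (ih (Nat.lt_succ_iff.mp h1))
    · have : m = k + 1 := le_antisymm h h1
      rw [this]

lemma cascade_step
    (hVdec : ∀ a ω m, Va a ω (m + 1) ≤ Va a ω m)
    (hCconv : ∀ a, ConvexC (Ca a))
    (n₀ : Ω → ℕ) (T : A → Finset Ω) (β : Ω)
    (hcount : ∀ ω, nAll T ω = n₀ ω + (if ω = β then 1 else 0))
    (hopt : ∀ a, OptIn (pa a) (Ka a) (xB Va n₀ T a) (Ca a) (T a)) :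
    (∃ T', AbNE pa Ka Va Ca T') ∨
    (∃ T' β', Phi Va n₀ T < Phi Va n₀ T' ∧
      (∀ ω, nAll T' ω = n₀ ω + (if ω = β' then 1 else 0)) ∧
      (∀ a, OptIn (pa a) (Ka a) (xB Va n₀ T' a) (Ca a) (T' a))) := by
  have hmono : ∀ (a : A) (ω : Ω) {m m' : ℕ}, m ≤ m' → Va a ω m' ≤ Va a ω m := by
    intro a ω m m' h
    induction m' with
    | zero => have : m = 0 := Nat.le_zero.mp h; rw [this]
    | succ k ih =>
      rcases Nat.lt_or_ge m (k + 1) with h1 | h1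
      · exact le_trans (hVdec a ω k) (ih (Nat.lt_succ_iff.mp h1))
      · have : m = k + 1 := le_antisymm h h1
        rw [this]
  have hrel : ∀ a ω, nOther T a ω + (if ω ∈ T a then 1 else 0)
      = n₀ ω + (if ω = β then 1 else 0) := by
    intro a ω
    have h1 := nAll_split T a ω
    have h2 := hcount ω
    omega
  have hxeq : ∀ a ω, ω ≠ β → xTrue Va T a ω = xB Va n₀ T a ω := by
    intro a ω hωβ
    have h := hrel a ω
    rw [if_neg hωβ] at h
    unfold xTrue xB
    by_cases hm : ω ∈ T a
    · rw [if_pos hm] at h ⊢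
      have e : nOther T a ω + 1 = n₀ ω + 0 := by omega
      rw [e]
    · rw [if_neg hm] at h ⊢
      have e : nOther T a ω + 1 = n₀ ω + 1 := by omega
      rw [e]
  have hxle : ∀ a ω, xTrue Va T a ω ≤ xB Va n₀ T a ω := by
    intro a ω
    have h := hrel a ω
    unfold xTrue xB
    apply hmono
    by_cases hm : ω ∈ T a
    · rw [if_pos hm] at h ⊢
      by_cases hb : ω = β
      · rw [if_pos hb] at h; omega
      · rw [if_neg hb] at h; omega
    · rw [if_neg hm] at h ⊢
      by_cases hb : ω = β
      · rw [if_pos hb] at h; omega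
      · rw [if_neg hb] at h; omega
  by_cases hcontent : ∀ a, OptIn (pa a) (Ka a) (xTrue Va T a) (Ca a) (T a)
  · exact Or.inl ⟨T, hcontent⟩
  push_neg at hcontent
  obtain ⟨a₁, ha₁⟩ := hcontent
  have hβmem : β ∈ T a₁ := by
    by_contra hβm
    apply ha₁
    apply opt_shift (hopt a₁) (xTrue Va T a₁)
    · intro ω hω
      have hωβ : ω ≠ β := fun hc => hβm (hc ▸ hω)
      exact le_of_eq (hxeq a₁ ω hωβ).symm
    · intro ω _ _
      exact hxle a₁ ω
  obtain ⟨S', hS'opt, hS'cases⟩ := dec_step (hCconv a₁) (hopt a₁) hβmem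
      (fun ω hω => hxeq a₁ ω hω) (hxle a₁ β)
  rcases hS'cases with rfl | ⟨hstrict, hcase⟩
  · exact absurd hS'opt ha₁
  -- common facts
  have hnOβ : nOther T a₁ β + 1 = n₀ β + 1 := by
    have h := hrel a₁ β
    rw [if_pos hβmem, if_pos rfl] at h; omega
  rcases hcase with rfl | ⟨γ, hγpa, hγS, rfl, hxlt⟩
  · -- drop case : new profile is a Nash equilibrium
    set S' := (T a₁).erase β with hS'
    set T' := Function.update T a₁ S' with hT'
    have hT'a₁ : T' a₁ = S' := Function.update_self _ _ _
    have hT'o : ∀ b, b ≠ a₁ → T' b = T b := fun b hb => Function.update_of_ne hb _ _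
    have hnO : ∀ ω, nOther T' a₁ ω = nOther T a₁ ω := fun ω => nOther_update T a₁ S' ω
    have hAll' : ∀ ω, nAll T' ω = n₀ ω := by
      intro ω
      have h1 := nAll_split T' a₁ ω
      rw [hT'a₁, hnO ω] at h1
      by_cases hb : ω = β
      · subst hb
        rw [if_neg (Finset.notMem_erase _ _)] at h1
        omega
      · have hiff : ω ∈ S' ↔ ω ∈ T a₁ := by
          simp [hS', Finset.mem_erase, hb]
        rw [if_congr hiff rfl rfl] at h1
        have h2 := hrel a₁ ω
        rw [if_neg hb] at h2
        omega
    refine Or.inl ⟨T', fun a => ?_⟩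
    by_cases ha : a = a₁
    · subst ha
      have : xTrue Va T' a = xTrue Va T a := by
        funext ω; unfold xTrue; rw [hnO ω]
      rw [this, hT'a₁]
      exact hS'opt
    · have hTa : T' a = T a := hT'o a ha
      have : xTrue Va T' a = xB Va n₀ T a := by
        funext ω
        unfold xTrue xB
        have h1 := nAll_split T' a ω
        rw [hAll' ω, hTa] at h1
        by_cases hm : ω ∈ T a
        · rw [if_pos hm] at h1 ⊢
          have e : nOther T' a ω + 1 = n₀ ω + 0 := by omega
          rw [e]
        · rw [if_neg hm] at h1 ⊢
          have e : nOther T' a ω + 1 = n₀ ω + 1 := by omega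
          rw [e]
      rw [this, hTa]
      exact hopt a
  · -- swap case
    set S' := insert γ ((T a₁).erase β) with hS'
    set T' := Function.update T a₁ S' with hT'
    have hγβ : γ ≠ β := fun hc => hγS (hc ▸ hβmem)
    have hβS' : β ∉ S' := by
      simp [hS', Finset.mem_insert, Finset.mem_erase]
      intro hc; exact absurd hc.symm hγβ
    have hγS' : γ ∈ S' := Finset.mem_insert_self _ _
    have hmemS' : ∀ ω, ω ≠ β → ω ≠ γ → (ω ∈ S' ↔ ω ∈ T a₁) := by
      intro ω h1 h2
      simp [hS', Finset.mem_insert, Finset.mem_erase, h1, h2]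
    have hT'a₁ : T' a₁ = S' := Function.update_self _ _ _
    have hT'o : ∀ b, b ≠ a₁ → T' b = T b := fun b hb => Function.update_of_ne hb _ _
    have hnO : ∀ ω, nOther T' a₁ ω = nOther T a₁ ω := fun ω => nOther_update T a₁ S' ω
    have hnOγ : nOther T a₁ γ = n₀ γ := by
      have h := hrel a₁ γ
      rw [if_neg hγS, if_neg hγβ] at h; omega
    have hAll' : ∀ ω, nAll T' ω = n₀ ω + (if ω = γ then 1 else 0) := by
      intro ω
      have h1 := nAll_split T' a₁ ω
      rw [hT'a₁, hnO ω] at h1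
      by_cases hb : ω = β
      · subst hb
        rw [if_neg hβS'] at h1
        rw [if_neg (Ne.symm hγβ)]
        omega
      · by_cases hg : ω = γ
        · subst hg
          rw [if_pos hγS'] at h1
          rw [if_pos rfl]
          omega
        · rw [if_congr (hmemS' ω hb hg) rfl rfl] at h1
          have h2 := hrel a₁ ω
          rw [if_neg hb] at h2
          rw [if_neg hg]
          omega
    have hoptB' : ∀ a, OptIn (pa a) (Ka a) (xB Va n₀ T' a) (Ca a) (T' a) := by
      intro a
      by_cases ha : a = a₁
      · subst ha
        rw [hT'a₁]
        apply opt_shift hS'opt (xB Va n₀ T' a)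
        · intro ω hω
          by_cases hg : ω = γ
          · subst hg
            unfold xTrue xB
            rw [if_pos (hT'a₁ ▸ hγS')]
            rw [hnOγ]
            exact hmono a ω (by omega)
          · have hωT : ω ∈ T a := by
              have := hω
              rw [hS'] at this
              rcases Finset.mem_insert.mp this with hc | hc
              · exact absurd hc hg
              · exact Finset.mem_of_mem_erase hc
            have hωβ : ω ≠ β := by
              intro hc
              subst hc
              rw [hS'] at hω
              rcases Finset.mem_insert.mp hω with hc | hc
              · exact hγβ hc.symm
              · exact Finset.notMem_erase _ _ hc
            apply le_of_eq
            unfold xTrue xB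
            rw [if_pos (hT'a₁ ▸ hω)]
            have h2 := hrel a ω
            rw [if_pos hωT, if_neg hωβ] at h2
            have e : nOther T a ω + 1 = n₀ ω + 0 := by omega
            rw [e]
        · intro ω hωpa hωS'
          by_cases hb : ω = β
          · subst hb
            apply le_of_eq
            unfold xTrue xB
            rw [if_neg (hT'a₁ ▸ hβS')]
            have e : n₀ ω + 1 = nOther T a ω + 1 := by omega
            rw [e]
          · have hωT : ω ∉ T a := by
              intro hc
              apply hωS'
              rw [hS']
              exact Finset.mem_insert_of_mem (Finset.mem_erase.mpr ⟨hb, hc⟩)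
            apply le_of_eq
            unfold xTrue xB
            rw [if_neg (fun hc => hωS' (hT'a₁ ▸ hc) : ω ∉ T' a)]
            have h2 := hrel a ω
            rw [if_neg hωT, if_neg hb] at h2
            have e : n₀ ω + 1 = nOther T a ω + 1 := by omega
            rw [e]
      · have hTa : T' a = T a := hT'o a ha
        have : xB Va n₀ T' a = xB Va n₀ T a := by
          funext ω; unfold xB; rw [hTa]
        rw [this, hTa]
        exact hopt a
    have hPhi : Phi Va n₀ T < Phi Va n₀ T' := by
      set g : Ω → ℝ := fun ω => Va a₁ ω (n₀ ω + 1) with hg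
      have hγer : γ ∉ (T a₁).erase β := fun hc => hγS (Finset.mem_of_mem_erase hc)
      have e1 : ∑ ω ∈ S', g ω = g γ + ∑ ω ∈ (T a₁).erase β, g ω := by
        rw [hS', Finset.sum_insert hγer]
      have e2 : ∑ ω ∈ (T a₁).erase β, g ω + g β = ∑ ω ∈ T a₁, g ω :=
        Finset.sum_erase_add _ _ hβmem
      have hgβ : xTrue Va T a₁ β = g β := by
        unfold xTrue
        have e : nOther T a₁ β + 1 = n₀ β + 1 := hnOβ
        rw [e]
      have hgγ : xTrue Va T a₁ γ = g γ := by
        unfold xTrue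
        rw [hnOγ]
      have hglt : g β < g γ := by rw [← hgβ, ← hgγ]; exact hxlt
      have e3 : Phi Va n₀ T' = Phi Va n₀ T + (g γ - g β) := by
        unfold Phi
        rw [← Finset.add_sum_erase _ _ (Finset.mem_univ a₁),
            ← Finset.add_sum_erase _ (fun a => ∑ ω ∈ T a, Va a ω (n₀ ω + 1)) (Finset.mem_univ a₁)]
        have e4 : ∑ a ∈ Finset.univ.erase a₁, ∑ ω ∈ T' a, Va a ω (n₀ ω + 1)
            = ∑ a ∈ Finset.univ.erase a₁, ∑ ω ∈ T a, Va a ω (n₀ ω + 1) := by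
          apply Finset.sum_congr rfl
          intro b hb
          rw [hT'o b (Finset.mem_erase.mp hb).1]
        rw [e4, hT'a₁]
        have : ∑ ω ∈ S', Va a₁ ω (n₀ ω + 1) = ∑ ω ∈ T a₁, Va a₁ ω (n₀ ω + 1) + (g γ - g β) := by
          have := e1; have := e2
          simp only [hg] at e1 e2 ⊢
          linarith
        rw [this]
        ring
      linarith
    exact Or.inr ⟨T', γ, hPhi, hAll', hoptB'⟩


lemma cascade
    (hVdec : ∀ a ω m, Va a ω (m + 1) ≤ Va a ω m)
    (hCconv : ∀ a, ConvexC (Ca a)) (n₀ : Ω → ℕ) :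
    ∀ M : ℕ, ∀ (T : A → Finset Ω) (β : Ω),
      meas Va n₀ T ≤ M →
      (∀ ω, nAll T ω = n₀ ω + (if ω = β then 1 else 0)) →
      (∀ a, OptIn (pa a) (Ka a) (xB Va n₀ T a) (Ca a) (T a)) →
      ∃ T', AbNE pa Ka Va Ca T' := by
  intro M
  induction M with
  | zero =>
    intro T β hM hcount hopt
    rcases cascade_step pa Ka Va Ca hVdec hCconv n₀ T β hcount hopt with h | ⟨T', β', hPhi, _, _⟩
    · exact h
    · have := meas_lt Va hPhi
      omega
  | succ M ih =>
    intro T β hM hcount hopt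
    rcases cascade_step pa Ka Va Ca hVdec hCconv n₀ T β hcount hopt with h | ⟨T', β', hPhi, hcount', hopt'⟩
    · exact h
    · have := meas_lt Va hPhi
      exact ih T' β' (by omega) hcount' hopt'

theorem abs_exists
    (hVdec : ∀ a ω m, Va a ω (m + 1) ≤ Va a ω m)
    (hCconv : ∀ a, ConvexC (Ca a)) :
    ∃ T, AbNE pa Ka Va Ca T := by
  suffices H : ∀ n (Kb : A → ℕ), (∑ a, Kb a) = n → ∃ T, AbNE pa Kb Va Ca T from H _ Ka rfl
  intro n
  induction n using Nat.strong_induction_on with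
  | _ n IH =>
    intro Kb hsum
    by_cases hz : ∀ a, Kb a = 0
    · refine ⟨fun _ => ∅, fun a => ⟨Finset.empty_subset _, by simp [hz a], fun U hU hUK => ?_⟩⟩
      have hU0 : U = ∅ := Finset.card_eq_zero.mp
        (le_antisymm (by simpa [hz a] using hUK) (Nat.zero_le _))
      rw [hU0]
    · push_neg at hz
      obtain ⟨a₀, ha₀⟩ := hz
      have hKpos : 1 ≤ Kb a₀ := Nat.one_le_iff_ne_zero.mpr ha₀
      have hnpos : 1 ≤ n := by
        have : Kb a₀ ≤ ∑ a, Kb a :=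
          Finset.single_le_sum (fun a _ => Nat.zero_le _) (Finset.mem_univ a₀)
        omega
      set K' := Function.update Kb a₀ (Kb a₀ - 1) with hK'
      have hK'a₀ : K' a₀ = Kb a₀ - 1 := Function.update_self _ _ _
      have hK'o : ∀ b, b ≠ a₀ → K' b = Kb b := fun b hb => Function.update_of_ne hb _ _
      have hsum' : ∑ a, K' a = n - 1 := by
        have e1 : ∑ a, Kb a = Kb a₀ + ∑ b ∈ Finset.univ.erase a₀, Kb b :=
          (Finset.add_sum_erase _ _ (Finset.mem_univ a₀)).symm
        have e2 : ∑ a, K' a = K' a₀ + ∑ b ∈ Finset.univ.erase a₀, K' b :=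
          (Finset.add_sum_erase _ _ (Finset.mem_univ a₀)).symm
        have e3 : ∑ b ∈ Finset.univ.erase a₀, K' b = ∑ b ∈ Finset.univ.erase a₀, Kb b :=
          Finset.sum_congr rfl fun b hb => hK'o b (Finset.mem_erase.mp hb).1
        omega
      obtain ⟨T0, hT0⟩ := IH (n - 1) (by omega) K' hsum'
      set n₀ := nAll T0 with hn₀
      -- extend a₀'s capacity by one
      have hopt0 : OptIn (pa a₀) (Kb a₀ - 1) (xTrue Va T0 a₀) (Ca a₀) (T0 a₀) := by
        have := hT0 a₀; rwa [hK'a₀] at this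
      obtain ⟨S', hS'opt, hS'cases⟩ := cap_extend (hCconv a₀) hopt0
      rw [Nat.sub_add_cancel hKpos] at hS'opt
      rcases hS'cases with rfl | ⟨β, hβpa, hβT0, rfl⟩
      · -- T0 is already an equilibrium for Kb
        refine ⟨T0, fun a => ?_⟩
        by_cases ha : a = a₀
        · subst ha; exact hS'opt
        · have := hT0 a; rwa [hK'o a ha] at this
      · -- start a cascade with bubble at β
        set S' := insert β (T0 a₀) with hS'
        set T1 := Function.update T0 a₀ S' with hT1
        have hT1a₀ : T1 a₀ = S' := Function.update_self _ _ _
        have hT1o : ∀ b, b ≠ a₀ → T1 b = T0 b := fun b hb => Function.update_of_ne hb _ _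
        have hnO : ∀ ω, nOther T1 a₀ ω = nOther T0 a₀ ω := fun ω => nOther_update T0 a₀ S' ω
        have hrel0 : ∀ a ω, nOther T0 a ω + (if ω ∈ T0 a then 1 else 0) = n₀ ω := by
          intro a ω
          have h1 := nAll_split T0 a ω
          have h3 : n₀ ω = nAll T0 ω := by rw [hn₀]
          omega
        have hcount1 : ∀ ω, nAll T1 ω = n₀ ω + (if ω = β then 1 else 0) := by
          intro ω
          have h1 := nAll_split T1 a₀ ω
          rw [hT1a₀, hnO ω] at h1
          have h2 := hrel0 a₀ ω
          by_cases hb : ω = β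
          · subst hb
            rw [if_pos (Finset.mem_insert_self _ _)] at h1
            rw [if_neg hβT0] at h2
            rw [if_pos rfl]
            omega
          · have hiff : ω ∈ S' ↔ ω ∈ T0 a₀ := by
              simp [hS', Finset.mem_insert, hb]
            rw [if_congr hiff rfl rfl] at h1
            rw [if_neg hb]
            omega
        have hopt1 : ∀ a, OptIn (pa a) (Kb a) (xB Va n₀ T1 a) (Ca a) (T1 a) := by
          intro a
          by_cases ha : a = a₀
          · subst ha
            rw [hT1a₀]
            apply opt_shift hS'opt (xB Va n₀ T1 a)
            · intro ω hω
              by_cases hb : ω = β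
              · subst hb
                unfold xTrue xB
                rw [if_pos (hT1a₀ ▸ hω)]
                have h2 := hrel0 a ω
                rw [if_neg hβT0] at h2
                apply hmono_of Va hVdec
                omega
              · have hωT0 : ω ∈ T0 a := by
                  rcases Finset.mem_insert.mp (hS' ▸ hω) with hc | hc
                  · exact absurd hc hb
                  · exact hc
                apply le_of_eq
                unfold xTrue xB
                rw [if_pos (hT1a₀ ▸ hω)]
                have h2 := hrel0 a ω
                rw [if_pos hωT0] at h2
                have e : nOther T0 a ω + 1 = n₀ ω + 0 := by omega
                rw [e]
            · intro ω hωpa hωS'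
              have hωβ : ω ≠ β := fun hc => hωS' (by rw [hS', hc]; exact Finset.mem_insert_self _ _)
              have hωT0 : ω ∉ T0 a := fun hc => hωS' (by rw [hS']; exact Finset.mem_insert_of_mem hc)
              apply le_of_eq
              unfold xTrue xB
              rw [if_neg (show ω ∉ T1 a by rw [hT1a₀]; exact hωS')]
              have h2 := hrel0 a ω
              rw [if_neg hωT0] at h2
              have e : n₀ ω + 1 = nOther T0 a ω + 1 := by omega
              rw [e]
          · have hTa : T1 a = T0 a := hT1o a ha
            have hxb : xB Va n₀ T1 a = xTrue Va T0 a := by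
              funext ω
              unfold xTrue xB
              rw [hTa]
              have h2 := hrel0 a ω
              by_cases hm : ω ∈ T0 a
              · rw [if_pos hm]
                rw [if_pos hm] at h2
                have e : n₀ ω + 0 = nOther T0 a ω + 1 := by omega
                rw [e]
              · rw [if_neg hm]
                rw [if_neg hm] at h2
                have e : n₀ ω + 1 = nOther T0 a ω + 1 := by omega
                rw [e]
            rw [hxb, hTa]
            have := hT0 a; rwa [hK'o a ha] at this
        exact cascade pa Kb Va Ca hVdec hCconv n₀ (meas Va n₀ T1) T1 β le_rfl hcount1 hopt1

end Abstract

end SGaux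

/-- Every search game admits a pure Bayesian Nash equilibrium. -/
theorem search_game_exists_pure_nash
    {N Ω : Type} [Fintype N] [DecidableEq N] [Fintype Ω] [DecidableEq Ω]
    (Part : N → Finset (Finset Ω)) (K : N → ℕ) (μ : Ω → ℝ)
    (c : N → ℕ → ℝ) (v : N → ℕ → Ω → ℝ)
    (hPart : ∀ i, IsPartition (Part i))
    (hμ_nonneg : ∀ ω, 0 ≤ μ ω) (hμ_sum : ∑ ω, μ ω = 1)
    (hμ_cell : ∀ i, ∀ π ∈ Part i, 0 < ∑ ω ∈ π, μ ω)
    (hc0 : ∀ i, c i 0 = 0)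
    (hc_mono : ∀ i k, c i k ≤ c i (k + 1))
    (hc_convex : ∀ i k, c i (k + 1) - c i k ≤ c i (k + 2) - c i (k + 1))
    (hv_nonneg : ∀ i m ω, 0 ≤ v i m ω)
    (hv_dec : ∀ i m ω, v i (m + 1) ω ≤ v i m ω) :
    ∃ s : N → Finset Ω → Finset Ω, IsNash Part K μ c v s := by
  classical
  -- the abstract agent game: agents are (player, cell) pairs
  set Va : ((i : N) × {π : Finset Ω // π ∈ Part i}) → Ω → ℕ → ℝ :=
    fun a ω m => μ ω * v a.1 m ω with hVa
  set Ca : ((i : N) × {π : Finset Ω // π ∈ Part i}) → ℕ → ℝ :=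
    fun a k => (∑ ω ∈ a.2.1, μ ω) * c a.1 k with hCa
  obtain ⟨T, hT⟩ := SGaux.abs_exists (fun a => a.2.1) (fun a => K a.1) Va Ca
    (fun a ω m => mul_le_mul_of_nonneg_left (hv_dec a.1 m ω) (hμ_nonneg ω))
    (fun a k => by
      have hw : (0:ℝ) ≤ ∑ ω ∈ a.2.1, μ ω := Finset.sum_nonneg fun ω _ => hμ_nonneg ω
      show Ca a (k+1) - Ca a k ≤ Ca a (k+2) - Ca a (k+1)
      rw [hCa]
      simp only
      rw [← mul_sub, ← mul_sub]
      exact mul_le_mul_of_nonneg_left (hc_convex a.1 k) hw)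
  set s : N → Finset Ω → Finset Ω :=
    fun i π => if h : π ∈ Part i then T ⟨i, ⟨π, h⟩⟩ else ∅ with hs
  have hTsub : ∀ a, T a ⊆ a.2.1 := fun a => (hT a).1
  have hTcard : ∀ a, (T a).card ≤ K a.1 := fun a => (hT a).2.1
  have hsiπ : ∀ (i : N) (π : Finset Ω) (h : π ∈ Part i), s i π = T ⟨i, ⟨π, h⟩⟩ := by
    intro i π h
    rw [hs]
    simp only [dif_pos h]
  have hsv : ValidStrat Part K s := by
    intro i π hπ
    rw [hsiπ i π hπ]
    exact ⟨hTsub ⟨i, ⟨π, hπ⟩⟩, hTcard ⟨i, ⟨π, hπ⟩⟩⟩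
  -- cell uniqueness
  have huniq : ∀ i, ∀ π ∈ Part i, ∀ π' ∈ Part i, ∀ ω, ω ∈ π → ω ∈ π' → π = π' := by
    intro i π hπ π' hπ' ω h1 h2
    by_contra hne
    exact (Finset.disjoint_left.mp ((hPart i).2.1 π hπ π' hπ' hne)) h1 h2
  -- characterization of searching
  have hchar : ∀ (r : N → Finset Ω → Finset Ω) (i : N), (∀ π ∈ Part i, r i π ⊆ π) →
      ∀ π, π ∈ Part i → ∀ ω ∈ π, (searchesAt Part r i ω ↔ ω ∈ r i π) := by
    intro r i hv π hπ ω hω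
    constructor
    · rintro ⟨π', hπ', hωπ', hωr⟩
      have he := huniq i π' hπ' π hπ ω hωπ' hω
      subst he
      exact hωr
    · intro h
      exact ⟨π, hπ, hω, h⟩
  -- splitting the searcher count at one player
  have hmsplit : ∀ (r : N → Finset Ω → Finset Ω) (i : N) (ω : Ω),
      mcount Part r ω = (if searchesAt Part r i ω then 1 else 0)
        + (Finset.univ.filter fun j => j ≠ i ∧ searchesAt Part r j ω).card := by
    intro r i ω
    unfold mcount
    rw [Finset.card_filter, Finset.card_filter]
    rw [← Finset.add_sum_erase _ _ (Finset.mem_univ i),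
        ← Finset.add_sum_erase _ (fun j => if j ≠ i ∧ searchesAt Part r j ω then 1 else 0)
          (Finset.mem_univ i)]
    have h1 : (if i ≠ i ∧ searchesAt Part r i ω then (1:ℕ) else 0) = 0 := by simp
    have h2 : ∀ j ∈ Finset.univ.erase i,
        (if searchesAt Part r j ω then (1:ℕ) else 0)
          = (if j ≠ i ∧ searchesAt Part r j ω then 1 else 0) := by
      intro j hj
      have hji : j ≠ i := (Finset.mem_erase.mp hj).1
      simp [hji]
    rw [Finset.sum_congr rfl h2, h1]
    omega
  -- number of other players searching ω (in the fixed profile s)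
  set mo : N → Ω → ℕ :=
    fun i ω => (Finset.univ.filter fun j => j ≠ i ∧ searchesAt Part s j ω).card with hmo
  -- matching the abstract "others" count
  have hcm : ∀ (i : N) (π : Finset Ω) (hπ : π ∈ Part i) (ω : Ω), ω ∈ π →
      SGaux.nOther T ⟨i, ⟨π, hπ⟩⟩ ω = mo i ω := by
    intro i π hπ ω hω
    unfold SGaux.nOther
    rw [hmo]
    apply Finset.card_bij (fun a _ => a.1)
    · rintro ⟨j, πj⟩ ha
      obtain ⟨-, hne, hmem⟩ := Finset.mem_filter.mp ha
      refine Finset.mem_filter.mpr ⟨Finset.mem_univ _, ?_, ?_⟩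
      · intro hji
        subst hji
        have hsub : πj = ⟨π, hπ⟩ :=
          Subtype.ext (huniq j πj.1 πj.2 π hπ ω (hTsub _ hmem) hω)
        exact hne (by rw [hsub])
      · refine ⟨πj.1, πj.2, hTsub _ hmem, ?_⟩
        rw [hsiπ j πj.1 πj.2]
        exact hmem
    · rintro ⟨j₁, π₁⟩ ha₁ ⟨j₂, π₂⟩ ha₂ h
      obtain ⟨-, hne₁, hm₁⟩ := Finset.mem_filter.mp ha₁
      obtain ⟨-, hne₂, hm₂⟩ := Finset.mem_filter.mp ha₂
      simp only at h
      subst h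
      have he : π₁ = π₂ :=
        Subtype.ext (huniq j₁ π₁.1 π₁.2 π₂.1 π₂.2 ω (hTsub _ hm₁) (hTsub _ hm₂))
      rw [he]
    · intro j hj
      obtain ⟨-, hji, hsearch⟩ := Finset.mem_filter.mp hj
      obtain ⟨π', hπ', hωπ', hωs⟩ := hsearch
      have hωT : ω ∈ T ⟨j, ⟨π', hπ'⟩⟩ := by
        rw [hsiπ j π' hπ'] at hωs
        exact hωs
      refine ⟨⟨j, ⟨π', hπ'⟩⟩, Finset.mem_filter.mpr ⟨Finset.mem_univ _, ?_, hωT⟩, rfl⟩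
      intro hc
      exact hji (congrArg Sigma.fst hc)
  -- payoff decomposition over cells
  have hdecomp : ∀ (i : N) (u : Finset Ω → Finset Ω), ValidFor Part K i u →
      ∀ (r : N → Finset Ω → Finset Ω), r i = u → (∀ j, j ≠ i → r j = s j) →
      payoff Part μ c v i r
        = ∑ π ∈ Part i, ((∑ ω ∈ u π, μ ω * v i (mo i ω + 1) ω)
            - (∑ ω ∈ π, μ ω) * c i (u π).card) := by
    intro i u hu r hri hrj
    have hrv : ∀ π ∈ Part i, r i π ⊆ π := by
      intro π hπ
      rw [hri]
      exact (hu π hπ).1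
    unfold payoff
    simp only [mul_sub]
    rw [Finset.sum_sub_distrib]
    -- cost part
    have hcost : ∑ ω : Ω, μ ω * ∑ π ∈ (Part i).filter (fun π => ω ∈ π), c i ((r i π).card)
        = ∑ π ∈ Part i, (∑ ω ∈ π, μ ω) * c i ((u π).card) := by
      have e1 : ∀ ω : Ω, μ ω * ∑ π ∈ (Part i).filter (fun π => ω ∈ π), c i ((r i π).card)
          = ∑ π ∈ Part i, (if ω ∈ π then μ ω * c i ((u π).card) else 0) := by
        intro ω
        rw [hri, Finset.sum_filter, Finset.mul_sum]
        apply Finset.sum_congr rfl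
        intro π hπ
        by_cases hm : ω ∈ π
        · rw [if_pos hm, if_pos hm]
        · rw [if_neg hm, if_neg hm, mul_zero]
      rw [Finset.sum_congr rfl (fun ω _ => e1 ω), Finset.sum_comm]
      apply Finset.sum_congr rfl
      intro π hπ
      rw [Finset.sum_ite_mem, Finset.univ_inter, Finset.sum_mul]
    rw [hcost]
    -- reward part
    have huniv : (Part i).biUnion id = Finset.univ := by
      ext ω
      simp only [Finset.mem_biUnion, id, Finset.mem_univ, iff_true]
      exact (hPart i).2.2 ω
    have hdisj : (↑(Part i) : Set (Finset Ω)).PairwiseDisjoint id :=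
      fun π hπ π' hπ' hne => (hPart i).2.1 π hπ π' hπ' hne
    have hrew : ∑ ω : Ω, μ ω * (if searchesAt Part r i ω then v i (mcount Part r ω) ω else 0)
        = ∑ π ∈ Part i, ∑ ω ∈ u π, μ ω * v i (mo i ω + 1) ω := by
      rw [← huniv, Finset.sum_biUnion hdisj]
      simp only [id_eq]
      apply Finset.sum_congr rfl
      intro π hπ
      have e2 : ∀ ω ∈ π, μ ω * (if searchesAt Part r i ω then v i (mcount Part r ω) ω else 0)
          = (if ω ∈ u π then μ ω * v i (mo i ω + 1) ω else 0) := by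
        intro ω hω
        have hiff := hchar r i hrv π hπ ω hω
        rw [hri] at hiff
        by_cases hm : ω ∈ u π
        · have hse : searchesAt Part r i ω := hiff.mpr hm
          have hmc : mcount Part r ω = mo i ω + 1 := by
            rw [hmsplit r i, if_pos hse, hmo]
            have : (Finset.univ.filter fun j => j ≠ i ∧ searchesAt Part r j ω)
                = (Finset.univ.filter fun j => j ≠ i ∧ searchesAt Part s j ω) := by
              apply Finset.filter_congr
              intro j _
              constructor
              · rintro ⟨hji, π', h1, h2, h3⟩
                exact ⟨hji, π', h1, h2, by rw [← hrj j hji]; exact h3⟩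
              · rintro ⟨hji, π', h1, h2, h3⟩
                exact ⟨hji, π', h1, h2, by rw [hrj j hji]; exact h3⟩
            rw [this]
            simp only [hmo]
            omega
          rw [if_pos hse, if_pos hm, hmc]
        · have hse : ¬ searchesAt Part r i ω := fun hc => hm (hiff.mp hc)
          rw [if_neg hse, if_neg hm, mul_zero]
      rw [Finset.sum_congr rfl e2, Finset.sum_ite_mem,
        Finset.inter_eq_right.mpr (hu π hπ).1]
    rw [hrew, ← Finset.sum_sub_distrib]
  -- conclude
  refine ⟨s, hsv, ?_⟩
  intro i t ht
  have hd1 := hdecomp i (s i) (hsv i) s rfl (fun j _ => rfl)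
  have hd2 := hdecomp i t ht (Function.update s i t) (Function.update_self _ _ _)
    (fun j hj => Function.update_of_ne hj _ _)
  rw [hd1, hd2]
  apply Finset.sum_le_sum
  intro π hπ
  have hopta := (hT ⟨i, ⟨π, hπ⟩⟩).2.2
  have e1 : ∀ (U : Finset Ω), U ⊆ π →
      (∑ ω ∈ U, μ ω * v i (mo i ω + 1) ω) - (∑ ω ∈ π, μ ω) * c i U.card
        = SGaux.fval (SGaux.xTrue Va T ⟨i, ⟨π, hπ⟩⟩) (Ca ⟨i, ⟨π, hπ⟩⟩) U := by
    intro U hU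
    unfold SGaux.fval SGaux.xTrue
    congr 1
    apply Finset.sum_congr rfl
    intro ω hω
    rw [hcm i π hπ ω (hU hω), hVa]
  rw [e1 (t π) (ht π hπ).1, e1 (s i π) (hsv i π hπ).1, hsiπ i π hπ]
  exact hopta (t π) (ht π hπ).1 (ht π hπ).2
end
end
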